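/- arXiv:math/0201072 — 6 statements merged into one kernel-verified Lean document; each statement's English description precedes it below -/
import Mathlib

section
/- For every open dense subset D of the Cantor space 2^ℕ and every natural number n, there exists a finite binary string s such that for every binary string t of length n, the basic open set N_{t⌢s} (of all infinite binary sequences extending t⌢s) is contained in D. -/
lemma cyl_open (w : List Bool) :
    IsOpen {x : ℕ → Bool | ∀ i (h : i < w.length), x i = w.get ⟨i, h⟩} := by
  have : {x : ℕ → Bool | ∀ i (h : i < w.length), x i = w.get ⟨i, h⟩}
      = ⋂ i : Fin w.length, {x : ℕ → Bool | x i = w.get i} := by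
    ext x
    simp only [Set.mem_setOf_eq, Set.mem_iInter]
    exact ⟨fun h i => h i i.2, fun h i hi => h ⟨i, hi⟩⟩
  rw [this]
  refine isOpen_iInter_of_finite fun i => ?_
  have he : {x : ℕ → Bool | x i = w.get i} = (fun x : ℕ → Bool => x i) ⁻¹' {w.get i} := rfl
  rw [he]
  exact (continuous_apply (i : ℕ)).isOpen_preimage _ (isOpen_discrete _)

lemma open_cyl_mem (D : Set (ℕ → Bool)) (hDopen : IsOpen D) {z : ℕ → Bool} (hz : z ∈ D) :
    ∃ m : ℕ, ∀ x : ℕ → Bool, (∀ i < m, x i = z i) → x ∈ D := by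
  have hmem : D ∈ nhds z := hDopen.mem_nhds hz
  rw [nhds_pi, Filter.mem_pi] at hmem
  obtain ⟨I, hIfin, t, ht, hsub⟩ := hmem
  obtain ⟨b, hb⟩ := hIfin.bddAbove
  refine ⟨b + 1, fun x hx => hsub ?_⟩
  intro i hi
  have : x i = z i := hx i (Nat.lt_succ_of_le (hb hi))
  rw [this]
  exact mem_of_mem_nhds (ht i)

lemma extend_into (D : Set (ℕ → Bool)) (hDopen : IsOpen D) (hDdense : Dense D)
    (u : List Bool) :
    ∃ v : List Bool, ∀ x : ℕ → Bool,
      (∀ i (h : i < (u ++ v).length), x i = (u ++ v).get ⟨i, h⟩) → x ∈ D := by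
  have hne : {x : ℕ → Bool | ∀ i (h : i < u.length), x i = u.get ⟨i, h⟩}.Nonempty := by
    refine ⟨fun i => u.getD i false, fun i h => ?_⟩
    simp [List.getD, List.getElem?_eq_getElem h]
  obtain ⟨z, hzD, hzu⟩ := hDdense.exists_mem_open (cyl_open u) hne
  obtain ⟨m, hm⟩ := open_cyl_mem D hDopen hzD
  set m' := max m u.length with hm'
  refine ⟨(List.range (m' - u.length)).map (fun j => z (u.length + j)), fun x hx => ?_⟩
  have hlen : (u ++ (List.range (m' - u.length)).map (fun j => z (u.length + j))).length = m' := by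
    simp [hm']
  apply hm
  intro i hi
  have hi' : i < m' := lt_of_lt_of_le hi (le_max_left _ _)
  have := hx i (by rw [hlen]; exact hi')
  rw [this]
  rcases lt_or_ge i u.length with h1 | h1
  · rw [List.get_eq_getElem, List.getElem_append_left h1]
    exact (hzu i h1).symm
  · rw [List.get_eq_getElem, List.getElem_append_right h1]
    simp only [List.getElem_map, List.getElem_range]
    congr 1
    omega

lemma list_extend (D : Set (ℕ → Bool)) (hDopen : IsOpen D) (hDdense : Dense D) :
    ∀ l : List (List Bool), ∃ s : List Bool, ∀ t ∈ l, ∀ x : ℕ → Bool,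
      (∀ i (h : i < (t ++ s).length), x i = (t ++ s).get ⟨i, h⟩) → x ∈ D := by
  intro l
  induction l with
  | nil => exact ⟨[], by simp⟩
  | cons t l ih =>
    obtain ⟨s, hs⟩ := ih
    obtain ⟨v, hv⟩ := extend_into D hDopen hDdense (t ++ s)
    refine ⟨s ++ v, ?_⟩
    intro t' ht' x hx
    rcases List.mem_cons.mp ht' with rfl | ht'
    · apply hv
      intro i h
      have h2 : i < (t' ++ (s ++ v)).length := by simpa using h
      rw [hx i h2]
      simp [List.get_eq_getElem]
    · apply hs t' ht'
      have hx' : ∀ i (h : i < ((t' ++ s) ++ v).length), x i = ((t' ++ s) ++ v).get ⟨i, h⟩ := by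
        rw [List.append_assoc]; exact hx
      intro i h
      have h1 : i < ((t' ++ s) ++ v).length := by simp at h ⊢; omega
      rw [hx' i h1, List.get_eq_getElem, List.get_eq_getElem]
      exact List.getElem_append_left h

/-- For every open dense subset `D` of Cantor space `2^ℕ` and every `n`,
there is a finite binary string `s` such that for every binary string `t` of length `n`,
the basic open set `N_{t ++ s}` is contained in `D`. -/
theorem open_dense_uniform_extension
    (D : Set (ℕ → Bool)) (hDopen : IsOpen D) (hDdense : Dense D) (n : ℕ) :
    ∃ s : List Bool, ∀ t : List Bool, t.length = n →
      ∀ x : ℕ → Bool, (∀ i (h : i < (t ++ s).length), x i = (t ++ s).get ⟨i, h⟩) →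
        x ∈ D := by
  obtain ⟨s, hs⟩ := list_extend D hDopen hDdense
    ((Finset.univ : Finset (Fin n → Bool)).toList.map (fun f => List.ofFn f))
  refine ⟨s, fun t htn => ?_⟩
  apply hs
  rw [List.mem_map]
  refine ⟨fun i => t.get ⟨i, by omega⟩, Finset.mem_toList.mpr (Finset.mem_univ _), ?_⟩
  subst htn
  simp [List.ofFn_getElem]
end

section
/- If G is a comeager (residual) subset of the Cantor space 2^ℕ, identified with subsets of ℕ, then there exists a partition of ℕ into infinitely many pairwise disjoint sets A₀, A₁, A₂, … and subsets Bᵢ ⊆ Aᵢ such that for every set E ⊆ ℕ, if E ∩ Aᵢ = Bᵢ for some i, then E ∈ G. -/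
open Set

/-- Cylinders determined by coordinates below `N` are open. -/
private lemma cyl_isOpen (z : ℕ → Bool) (N : ℕ) :
    IsOpen {x : ℕ → Bool | ∀ j, j < N → x j = z j} := by
  have : {x : ℕ → Bool | ∀ j, j < N → x j = z j}
      = ⋂ j ∈ Finset.range N, {x : ℕ → Bool | x j = z j} := by
    ext x; simp [Finset.mem_range]
  rw [this]
  refine isOpen_biInter_finset fun j _ => ?_
  show IsOpen ((fun x : ℕ → Bool => x j) ⁻¹' {z j})
  exact (isOpen_discrete {z j}).preimage (continuous_apply j)

/-- If `V` is open and `y ∈ V`, membership in `V` is forced by finitely many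
initial coordinates of `y`. -/
private lemma open_nbhd {V : Set (ℕ → Bool)} (hV : IsOpen V) {y : ℕ → Bool}
    (hy : y ∈ V) : ∃ N, ∀ x : ℕ → Bool, (∀ j, j < N → x j = y j) → x ∈ V := by
  obtain ⟨I, u, hu, hsub⟩ := isOpen_pi_iff.1 hV y hy
  refine ⟨(I.sup id) + 1, fun x hx => hsub ?_⟩
  intro a ha
  have : x a = y a := hx a (Nat.lt_succ_of_le (Finset.le_sup (f := id) ha))
  rw [this]
  exact (hu a ha).2

/-- Key step: for an open dense `V` and a threshold `k`, there are `k' > k` and a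
pattern `σ` on `[k, k')` such that any `x` matching `σ` there lies in `V`. -/
private lemma step {V : Set (ℕ → Bool)} (hVo : IsOpen V) (hVd : Dense V) (k : ℕ) :
    ∃ k' : ℕ, ∃ σ : ℕ → Bool, k < k' ∧
      ∀ x : ℕ → Bool, (∀ j, k ≤ j → j < k' → x j = σ j) → x ∈ V := by
  classical
  have main : ∀ T : Finset (Fin k → Bool), ∃ k' : ℕ, ∃ σ : ℕ → Bool, k ≤ k' ∧
      ∀ x : ℕ → Bool, (fun i : Fin k => x i) ∈ T →
        (∀ j, k ≤ j → j < k' → x j = σ j) → x ∈ V := by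
    intro T
    induction T using Finset.induction_on with
    | empty => exact ⟨k, fun _ => false, le_rfl, fun x hx => absurd hx (by simp)⟩
    | @insert g T hg ih =>
      obtain ⟨k'', σ'', hk'', hforce⟩ := ih
      set z : ℕ → Bool := fun j => if h : j < k then g ⟨j, h⟩ else σ'' j with hz
      -- find a point of V agreeing with z below k''
      have hzcyl : z ∈ {x : ℕ → Bool | ∀ j, j < k'' → x j = z j} := fun _ _ => rfl
      obtain ⟨y, hycyl, hyV⟩ :=
        (mem_closure_iff.1 (hVd z)) _ (cyl_isOpen z k'') hzcyl
      obtain ⟨N, hN⟩ := open_nbhd hVo hyV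
      refine ⟨max (max k'' N) k, y, le_max_right _ _, ?_⟩
      intro x hxT hxσ
      rcases Finset.mem_insert.1 hxT with hxg | hxT'
      · -- restriction is g : x agrees with y below N
        refine hN x fun j hj => ?_
        by_cases hjk : j < k
        · have h1 : x j = g ⟨j, hjk⟩ := congrFun hxg ⟨j, hjk⟩
          have h2 : y j = z j := hycyl j (lt_of_lt_of_le hjk hk'')
          rw [h1, h2, hz]; simp [hjk]
        · exact hxσ j (le_of_not_gt hjk)
            (lt_of_lt_of_le hj (le_trans (le_max_right _ _) (le_max_left _ _)))
      · -- restriction in T : use induction hypothesis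
        refine hforce x hxT' fun j hj1 hj2 => ?_
        have h1 : x j = y j := hxσ j hj1
          (lt_of_lt_of_le hj2 (le_trans (le_max_left _ _) (le_max_left _ _)))
        have h2 : y j = z j := hycyl j hj2
        rw [h1, h2, hz]; simp [Nat.not_lt.2 hj1]
  obtain ⟨k', σ, hk', hforce⟩ := main Finset.univ
  exact ⟨k' + 1, σ, Nat.lt_succ_of_le hk', fun x hx =>
    hforce x (Finset.mem_univ _) fun j h1 h2 => hx j h1 (Nat.lt_succ_of_lt h2)⟩

/-- If `G` is comeager in Cantor space (identified with subsets of `ℕ`),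
then there is a partition of `ℕ` into infinitely many pairwise disjoint sets `A i`
and sets `B i ⊆ A i` such that every `E ⊆ ℕ` with `E ∩ A i = B i` for some `i`
belongs to `G`. -/
theorem comeager_partition_capture
    (G : Set (ℕ → Bool)) (hG : G ∈ residual (ℕ → Bool)) :
    ∃ (A B : ℕ → Set ℕ),
      Pairwise (Function.onFun Disjoint A) ∧
      (⋃ i, A i) = Set.univ ∧
      (∀ i, B i ⊆ A i) ∧
      ∀ E : ℕ → Bool, (∃ i, {n | E n = true} ∩ A i = B i) → E ∈ G := by
  classical
  -- extract a sequence of dense open sets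
  obtain ⟨S, hSo, hSd, hSc, hSsub⟩ := mem_residual_iff.1 hG
  obtain ⟨U, hU⟩ := (hSc.insert Set.univ).exists_eq_range ⟨_, mem_insert _ _⟩
  have hUmem : ∀ n, U n ∈ insert Set.univ S := by
    intro n
    rw [hU]; exact mem_range_self n
  have hUo : ∀ n, IsOpen (U n) := by
    intro n
    rcases hUmem n with h | h
    · rw [h]; exact isOpen_univ
    · exact hSo _ h
  have hUd : ∀ n, Dense (U n) := by
    intro n
    rcases hUmem n with h | h
    · rw [h]; exact dense_univ
    · exact hSd _ h
  have hUsub : (⋂ n, U n) ⊆ G := by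
    refine Subset.trans ?_ hSsub
    intro x hx t ht
    have : t ∈ insert Set.univ S := mem_insert_of_mem _ ht
    rw [hU] at this
    obtain ⟨n, rfl⟩ := this
    exact mem_iInter.1 hx n
  -- finite intersections
  set V : ℕ → Set (ℕ → Bool) := fun n => ⋂ m ∈ Finset.range (n + 1), U m with hV
  have hVo : ∀ n, IsOpen (V n) := fun n => isOpen_biInter_finset fun m _ => hUo m
  have hVd : ∀ n, Dense (V n) := by
    intro n
    induction n with
    | zero => simpa [hV] using hUd 0
    | succ n ih =>
      have : V (n + 1) = U (n + 1) ∩ V n := by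
        simp only [hV, Finset.range_add_one (n := n + 1), Finset.set_biInter_insert]
      rw [this]
      exact (hUd (n + 1)).inter_of_isOpen_left ih (hUo (n + 1))
  have hVsub : ∀ m n, m ≤ n → V n ⊆ U m := fun m n hmn =>
    biInter_subset_of_mem (Finset.mem_range.2 (Nat.lt_succ_of_le hmn))
  -- choose the interval extensions
  have H : ∀ n k, ∃ p : ℕ × (ℕ → Bool), k < p.1 ∧
      ∀ x : ℕ → Bool, (∀ j, k ≤ j → j < p.1 → x j = p.2 j) → x ∈ V n := by
    intro n k
    obtain ⟨k', σ, h1, h2⟩ := step (hVo n) (hVd n) k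
    exact ⟨⟨k', σ⟩, h1, h2⟩
  choose F hF1 hF2 using H
  -- recursive construction
  set c : ℕ → ℕ × (ℕ → Bool) :=
    fun n => Nat.rec (⟨0, fun _ => false⟩ : ℕ × (ℕ → Bool)) (fun n p => F n p.1) n with hc
  set K : ℕ → ℕ := fun n => (c n).1 with hK
  have hcsucc : ∀ n, c (n + 1) = F n (K n) := fun n => rfl
  have hK0 : K 0 = 0 := rfl
  have hKlt : ∀ n, K n < K (n + 1) := fun n => hF1 n (K n)
  have hKmono : StrictMono K := strictMono_nat_of_lt_succ hKlt
  have hKle : ∀ n, n ≤ K n := fun n => by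
    have := hKmono.le_apply (x := n); omega
  set pat : ℕ → ℕ → Bool := fun n => (c (n + 1)).2 with hpat
  have hforce : ∀ n, ∀ x : ℕ → Bool,
      (∀ j, K n ≤ j → j < K (n + 1) → x j = pat n j) → x ∈ V n :=
    fun n x hx => hF2 n (K n) x hx
  -- index of the interval containing j
  set idx : ℕ → ℕ := fun j => Nat.findGreatest (fun n => K n ≤ j) j with hidx
  have hidx_le : ∀ j, K (idx j) ≤ j := by
    intro j
    exact Nat.findGreatest_spec (P := fun n => K n ≤ j) (m := 0) (Nat.zero_le j) (Nat.zero_le j)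
  have hidx_lt : ∀ j, j < K (idx j + 1) := by
    intro j
    by_contra h
    push_neg at h
    have h1 : idx j + 1 ≤ j := le_trans (hKle _) h
    have h2 : idx j + 1 ≤ idx j := Nat.le_findGreatest h1 h
    omega
  have hidx_unique : ∀ n j, K n ≤ j → j < K (n + 1) → idx j = n := by
    intro n j h1 h2
    rcases lt_trichotomy (idx j) n with h | h | h
    · exfalso
      have hle : idx j + 1 ≤ n := h
      have h3 : K (idx j + 1) ≤ K n := hKmono.monotone hle
      have h4 := hidx_lt j
      omega
    · exact h
    · exfalso
      have hle : n + 1 ≤ idx j := h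
      have h3 : K (n + 1) ≤ K (idx j) := hKmono.monotone hle
      have h4 := hidx_le j
      omega
  -- the partition
  refine ⟨fun i => {j | (Nat.unpair (idx j)).1 = i},
    fun i => {j | (Nat.unpair (idx j)).1 = i ∧ pat (idx j) j = true}, ?_, ?_, ?_, ?_⟩
  · intro i i' hii'
    simp only [Function.onFun, Set.disjoint_left]
    intro j hj hj'
    exact hii' (hj ▸ hj')
  · ext j
    simp only [mem_iUnion, mem_setOf_eq, mem_univ, iff_true]
    exact ⟨(Nat.unpair (idx j)).1, rfl⟩
  · intro i j hj
    exact hj.1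
  · rintro E ⟨i, hEi⟩
    apply hUsub
    rw [mem_iInter]
    intro m
    set n : ℕ := Nat.pair i m with hn
    have hnm : m ≤ n := Nat.right_le_pair i m
    refine hVsub m n hnm ?_
    apply hforce n E
    intro j h1 h2
    have hidxj : idx j = n := hidx_unique n j h1 h2
    have hjA : (Nat.unpair (idx j)).1 = i := by rw [hidxj, hn, Nat.unpair_pair]
    have hEi' : {n | E n = true} ∩ {j | (Nat.unpair (idx j)).1 = i}
        = {j | (Nat.unpair (idx j)).1 = i ∧ pat (idx j) j = true} := hEi
    cases hEj : E j with
    | true =>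
      have hB : j ∈ {j | (Nat.unpair (idx j)).1 = i ∧ pat (idx j) j = true} := by
        rw [← hEi']; exact ⟨hEj, hjA⟩
      rw [← hidxj]
      exact hB.2.symm
    | false =>
      cases hp : pat n j with
      | false => rfl
      | true =>
        have hB : j ∈ {n | E n = true} ∩ {j | (Nat.unpair (idx j)).1 = i} := by
          rw [hEi']
          exact ⟨hjA, by rw [hidxj]; exact hp⟩
        have : E j = true := hB.1
        rw [hEj] at this
        exact absurd this (by simp)
end

section
/- If G is a comeager subset of the Cantor space 2^ℕ, then there exists a partition ℕ = A₀ ∪ A₁ into two disjoint sets and subsets B₀ ⊆ A₀, B₁ ⊆ A₁ such that for every D ⊆ ℕ, if D ∩ A₀ = B₀ or D ∩ A₁ = B₁, then D ∈ G. In particular B₀, B₁, and B₀ ∪ B₁ all belong to G. -/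
/-- A cylinder in Cantor space is open. -/
lemma cantor_cylinder_open (t : ℕ → Bool) (m : ℕ) :
    IsOpen {z : ℕ → Bool | ∀ i < m, z i = t i} := by
  have : {z : ℕ → Bool | ∀ i < m, z i = t i}
      = Set.pi {i | i < m} (fun i => {t i}) := by
    ext z; simp [Set.mem_pi]
  rw [this]
  exact isOpen_set_pi (Set.finite_Iio m) (fun a _ => isOpen_discrete _)

/-- Open sets in Cantor space contain a cylinder around each point. -/
lemma cantor_open_nbhd {U : Set (ℕ → Bool)} (hU : IsOpen U) {x : ℕ → Bool}
    (hx : x ∈ U) : ∃ n, ∀ z : ℕ → Bool, (∀ i < n, z i = x i) → z ∈ U := by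
  obtain ⟨I, u, hIu, hsub⟩ := isOpen_pi_iff.mp hU x hx
  obtain ⟨n, hn⟩ : ∃ n, ∀ i ∈ I, i < n := ⟨(I.sup id) + 1, fun i hi =>
    Nat.lt_succ_of_le (Finset.le_sup (f := id) hi)⟩
  refine ⟨n, fun z hz => hsub fun i hi => ?_⟩
  rw [hz i (hn i hi)]
  exact (hIu i hi).2

/-- Dense sets in Cantor space meet every cylinder. -/
lemma cantor_dense_hit {U : Set (ℕ → Bool)} (hU : Dense U) (t : ℕ → Bool) (m : ℕ) :
    ∃ z ∈ U, ∀ i < m, z i = t i := by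
  obtain ⟨z, hzU, hz⟩ := hU.exists_mem_open (cantor_cylinder_open t m) ⟨t, fun i _ => rfl⟩
  exact ⟨z, hzU, hz⟩

/-- Single extension step for the block construction. -/
lemma cantor_step1 {U : Set (ℕ → Bool)} (hUo : IsOpen U) (hUd : Dense U)
    (σ s : ℕ → Bool) (n m : ℕ) (hnm : n ≤ m) :
    ∃ (m' : ℕ) (s' : ℕ → Bool), m ≤ m' ∧ (∀ i, n ≤ i → i < m → s' i = s i) ∧
      ∀ x : ℕ → Bool, (∀ i < n, x i = σ i) →
        (∀ i, n ≤ i → i < m' → x i = s' i) → x ∈ U := by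
  set t : ℕ → Bool := fun i => if i < n then σ i else s i with ht
  obtain ⟨z, hzU, hz⟩ := cantor_dense_hit hUd t m
  obtain ⟨n₂, hn₂⟩ := cantor_open_nbhd hUo hzU
  refine ⟨max m n₂, z, le_max_left _ _, ?_, ?_⟩
  · intro i hni him
    rw [hz i him]; simp [ht, Nat.not_lt.mpr hni]
  · intro x hσ hs'
    apply hn₂
    intro i hi
    rcases lt_or_ge i n with h | h
    · rw [hσ i h, hz i (lt_of_lt_of_le h hnm)]
      simp [ht, h]
    · exact hs' i h (lt_of_lt_of_le hi (le_max_right _ _))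

/-- Iterate the extension step over a finite list of (pattern, dense open set) pairs. -/
lemma cantor_step2 (L : List ((ℕ → Bool) × Set (ℕ → Bool)))
    (hL : ∀ p ∈ L, IsOpen p.2 ∧ Dense p.2) (n m : ℕ) (hnm : n ≤ m) :
    ∃ (m' : ℕ) (s' : ℕ → Bool), m ≤ m' ∧
      ∀ p ∈ L, ∀ x : ℕ → Bool, (∀ i < n, x i = p.1 i) →
        (∀ i, n ≤ i → i < m' → x i = s' i) → x ∈ p.2 := by
  induction L with
  | nil => exact ⟨m, fun _ => false, le_rfl, by simp⟩
  | cons p L ih =>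
    obtain ⟨m₁, s₁, hm₁, hprop₁⟩ := ih (fun q hq => hL q (List.mem_cons_of_mem p hq))
    obtain ⟨m', s', hm', hagree, hprop⟩ :=
      cantor_step1 (hL p List.mem_cons_self).1 (hL p List.mem_cons_self).2
        p.1 s₁ n m₁ (le_trans hnm hm₁)
    refine ⟨m', s', le_trans hm₁ hm', ?_⟩
    intro q hq x hσ hs'
    rcases List.mem_cons.mp hq with h | h
    · subst h; exact hprop x hσ hs'
    · refine hprop₁ q h x hσ ?_
      intro i hni him
      rw [hs' i hni (lt_of_lt_of_le him hm'), hagree i hni him]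

/-- Key step: find a block `[n,m)` and values `s` on it forcing membership in
`U j` for all `j ≤ k`, regardless of the values outside the block. -/
lemma cantor_key (U : ℕ → Set (ℕ → Bool)) (hUo : ∀ j, IsOpen (U j))
    (hUd : ∀ j, Dense (U j)) (n k : ℕ) :
    ∃ (m : ℕ) (s : ℕ → Bool), n < m ∧
      ∀ x : ℕ → Bool, (∀ i, n ≤ i → i < m → x i = s i) → ∀ j ≤ k, x ∈ U j := by
  classical
  set L : List ((ℕ → Bool) × Set (ℕ → Bool)) :=
    (List.range (k+1)).flatMap (fun j =>
      (Finset.univ : Finset (Fin n → Bool)).toList.map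
        (fun σ => (fun i => if h : i < n then σ ⟨i, h⟩ else false, U j))) with hLdef
  have hL : ∀ p ∈ L, IsOpen p.2 ∧ Dense p.2 := by
    intro p hp
    simp only [hLdef, List.mem_flatMap, List.mem_map, List.mem_range] at hp
    obtain ⟨j, _, σ, _, rfl⟩ := hp
    exact ⟨hUo j, hUd j⟩
  obtain ⟨m', s', hm', hprop⟩ := cantor_step2 L hL n (n+1) (Nat.le_succ n)
  refine ⟨m', s', lt_of_lt_of_le (Nat.lt_succ_self n) hm', ?_⟩
  intro x hx j hj
  have hmem : ((fun i => if h : i < n then (fun p : Fin n => x p.1) ⟨i, h⟩ else false :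
      ℕ → Bool), U j) ∈ L := by
    simp only [hLdef, List.mem_flatMap, List.mem_map, List.mem_range]
    exact ⟨j, Nat.lt_succ_of_le hj, fun p : Fin n => x p.1,
      Finset.mem_toList.mpr (Finset.mem_univ _), rfl⟩
  have := hprop _ hmem x ?_ hx
  · exact this
  · intro i hi
    simp [hi]

/-- From a countable family of dense open sets, build blocks, a block index
function, and a global pattern. -/
lemma cantor_blocks (U : ℕ → Set (ℕ → Bool)) (hUo : ∀ j, IsOpen (U j))
    (hUd : ∀ j, Dense (U j)) :
    ∃ (N : ℕ → ℕ) (s : ℕ → Bool) (b : ℕ → ℕ),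
      (∀ k i, N k ≤ i → i < N (k+1) → b i = k) ∧
      ∀ k, ∀ x : ℕ → Bool, (∀ i, N k ≤ i → i < N (k+1) → x i = s i) →
        ∀ j ≤ k, x ∈ U j := by
  classical
  choose M S hlt hprop using cantor_key U hUo hUd
  set N : ℕ → ℕ := fun k => Nat.rec 0 (fun k n => M n k) k with hN
  have hN0 : N 0 = 0 := rfl
  have hNsucc : ∀ k, N (k+1) = M (N k) k := fun k => rfl
  have hmono : StrictMono N := strictMono_nat_of_lt_succ (fun k => by
    rw [hNsucc]; exact hlt (N k) k)
  have hNe : ∀ k, k ≤ N k := fun k => hmono.le_apply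
  have hb : ∀ k i, N k ≤ i → i < N (k + 1) →
      Nat.findGreatest (fun k => N k ≤ i) i = k := by
    intro k i hki hik
    apply le_antisymm
    · by_contra h
      push_neg at h
      have h1 : N (k+1) ≤ N (Nat.findGreatest (fun k => N k ≤ i) i) := hmono.monotone h
      have h2 : N (Nat.findGreatest (fun k => N k ≤ i) i) ≤ i :=
        Nat.findGreatest_spec (P := fun k => N k ≤ i) (m := 0) (Nat.zero_le i)
          (by simp [hN0])
      omega
    · exact Nat.le_findGreatest (le_trans (hNe k) hki) hki
  refine ⟨N, fun i => S (N (Nat.findGreatest (fun k => N k ≤ i) i))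
    (Nat.findGreatest (fun k => N k ≤ i) i) i,
    fun i => Nat.findGreatest (fun k => N k ≤ i) i, fun k i h1 h2 => hb k i h1 h2, ?_⟩
  intro k x hx j hj
  refine hprop (N k) k x ?_ j hj
  intro i hki hik
  have hik' : i < N (k+1) := by rw [hNsucc]; exact hik
  have h3 := hx i hki hik'
  simp only at h3
  rw [h3, hb k i hki hik']

/-- If `G` is comeager in Cantor space then there is a partition
`ℕ = A₀ ∪ A₁` and sets `B₀ ⊆ A₀`, `B₁ ⊆ A₁` such that every `D` with
`D ∩ A₀ = B₀` or `D ∩ A₁ = B₁` belongs to `G`; in particular `B₀`, `B₁` and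
`B₀ ∪ B₁` belong to `G`. -/
theorem comeager_two_piece_partition
    (G : Set (ℕ → Bool)) (hG : G ∈ residual (ℕ → Bool)) :
    ∃ (A₀ A₁ : Set ℕ) (B₀ B₁ : ℕ → Bool),
      Disjoint A₀ A₁ ∧ A₀ ∪ A₁ = Set.univ ∧
      {n | B₀ n = true} ⊆ A₀ ∧ {n | B₁ n = true} ⊆ A₁ ∧
      (∀ D : ℕ → Bool,
        ({n | D n = true} ∩ A₀ = {n | B₀ n = true} ∨
         {n | D n = true} ∩ A₁ = {n | B₁ n = true}) → D ∈ G) ∧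
      B₀ ∈ G ∧ B₁ ∈ G ∧ (fun n => B₀ n || B₁ n) ∈ G := by
  classical
  -- Extract a countable family of dense open sets
  obtain ⟨S, hSo, hSd, hSc, hSsub⟩ := mem_residual_iff.mp hG
  obtain ⟨U, hU⟩ := (hSc.insert Set.univ).exists_eq_range ⟨_, Set.mem_insert _ _⟩
  have hUmem : ∀ j, U j ∈ insert Set.univ S := fun j => by
    rw [hU]; exact Set.mem_range_self j
  have hUo : ∀ j, IsOpen (U j) := fun j => by
    rcases hUmem j with h | h
    · rw [h]; exact isOpen_univ
    · exact hSo _ h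
  have hUd : ∀ j, Dense (U j) := fun j => by
    rcases hUmem j with h | h
    · rw [h]; exact dense_univ
    · exact hSd _ h
  have hsub : (⋂ j, U j) ⊆ G := by
    intro x hx
    apply hSsub
    intro t ht
    have h2 : t ∈ Set.range U := by rw [← hU]; exact Set.mem_insert_of_mem _ ht
    obtain ⟨j, rfl⟩ := h2
    exact Set.mem_iInter.mp hx j
  -- Build the blocks
  obtain ⟨N, s, b, hb, hblock⟩ := cantor_blocks U hUo hUd
  clear hU hUmem hSo hSd hSc hSsub hG
  have main : ∀ D : ℕ → Bool,
      ({n | D n = true} ∩ {n | Even (b n)} =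
        {n | (if Even (b n) then s n else false) = true} ∨
       {n | D n = true} ∩ {n | ¬ Even (b n)} =
        {n | (if Even (b n) then false else s n) = true}) → D ∈ G := by
    intro D hD
    apply hsub
    rw [Set.mem_iInter]
    intro j
    rcases hD with hD | hD
    · have hDs : ∀ n, Even (b n) → D n = s n := by
        intro n hn
        have h1 : n ∈ {n | D n = true} ∩ {n | Even (b n)} ↔
            n ∈ {n | (if Even (b n) then s n else false) = true} := by rw [hD]
        simp only [Set.mem_inter_iff, Set.mem_setOf_eq, hn, if_true, and_true] at h1
        cases hsn : s n <;> cases hDn : D n <;> simp [hsn, hDn] at h1 ⊢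
      refine hblock (2*j) D ?_ j (by omega)
      intro i h1 h2
      exact hDs i (by rw [hb (2*j) i h1 h2]; exact ⟨j, two_mul j⟩)
    · have hDs : ∀ n, ¬ Even (b n) → D n = s n := by
        intro n hn
        have h1 : n ∈ {n | D n = true} ∩ {n | ¬ Even (b n)} ↔
            n ∈ {n | (if Even (b n) then false else s n) = true} := by rw [hD]
        simp only [Set.mem_inter_iff, Set.mem_setOf_eq, hn, if_neg hn,
          not_false_eq_true, and_true] at h1
        cases hsn : s n <;> cases hDn : D n <;> simp [hsn, hDn] at h1 ⊢
      refine hblock (2*j+1) D ?_ j (by omega)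
      intro i h1 h2
      refine hDs i ?_
      rw [hb (2*j+1) i h1 h2]
      rintro ⟨r, hr⟩
      omega
  refine ⟨{n | Even (b n)}, {n | ¬ Even (b n)},
    fun n => if Even (b n) then s n else false,
    fun n => if Even (b n) then false else s n, disjoint_compl_right,
    Set.union_compl_self _, ?_, ?_, main, ?_, ?_, ?_⟩
  · intro n hn
    simp only [Set.mem_setOf_eq] at hn ⊢
    by_cases h : Even (b n)
    · exact h
    · simp [h] at hn
  · intro n hn
    simp only [Set.mem_setOf_eq] at hn ⊢
    by_cases h : Even (b n)
    · simp [h] at hn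
    · exact h
  · apply main
    left
    ext n
    by_cases h : Even (b n) <;> simp [h] <;> tauto
  · apply main
    right
    ext n
    by_cases h : Even (b n) <;> simp [h] <;> tauto
  · apply main
    left
    ext n
    by_cases h : Even (b n) <;> simp [h] <;> tauto
end

section
/- Let (eᵢ) be a normalized basic sequence in a Banach space X, and suppose there exist two normalized block basic sequences (xᵢ) and (yᵢ) of (eᵢ) that are not equivalent. Then the relation E₀ on 2^ℕ (eventual agreement of binary sequences) Borel reduces to the equivalence relation of equivalence of basic sequences on the space of normalized block bases of (eᵢ): there is a Borel (indeed continuous) map f from 2^ℕ to the Polish space of normalized block bases such that α E₀ β if and only if f(α) is equivalent to f(β). -/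
open Filter

variable {X : Type*} [NormedAddCommGroup X] [NormedSpace ℝ X]

/-- `e` is a basic sequence: nonzero, with uniformly bounded initial projections. -/
def IsBasicSeq (e : ℕ → X) : Prop :=
  (∀ i, e i ≠ 0) ∧ ∃ K : ℝ, 1 ≤ K ∧ ∀ (a : ℕ → ℝ) (n m : ℕ), n ≤ m →
    ‖∑ i ∈ Finset.range n, a i • e i‖ ≤ K * ‖∑ i ∈ Finset.range m, a i • e i‖

/-- Equivalence of two sequences: uniform two-sided comparison of norms of
finite linear combinations. -/
def SeqEquiv (u v : ℕ → X) : Prop :=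
  ∃ C : ℝ, 1 ≤ C ∧ ∀ (a : ℕ → ℝ) (n : ℕ),
    (1 / C) * ‖∑ i ∈ Finset.range n, a i • u i‖ ≤ ‖∑ i ∈ Finset.range n, a i • v i‖ ∧
    ‖∑ i ∈ Finset.range n, a i • v i‖ ≤ C * ‖∑ i ∈ Finset.range n, a i • u i‖

/-- `x` is a block basic sequence of `e`: nonzero vectors with consecutive
finite supports with respect to `e`. -/
def IsBlockBasis (e x : ℕ → X) : Prop :=
  ∃ (a : ℕ → ℝ) (m : ℕ → ℕ), StrictMono m ∧
    ∀ k, x k ≠ 0 ∧ x k = ∑ i ∈ Finset.Ico (m k) (m (k + 1)), a i • e i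

/-- `E₀` : eventual agreement of binary sequences. -/
def E0Rel (α β : ℕ → Bool) : Prop := ∃ n, ∀ m ≥ n, α m = β m

/-- Coordinate functional bound for a normalized basic sequence. -/
lemma coord_bound {z : ℕ → X} {K : ℝ}
    (hb : ∀ (a : ℕ → ℝ) (n m : ℕ), n ≤ m →
      ‖∑ i ∈ Finset.range n, a i • z i‖ ≤ K * ‖∑ i ∈ Finset.range m, a i • z i‖)
    (hn : ∀ i, ‖z i‖ = 1) (a : ℕ → ℝ) {i n : ℕ} (hi : i < n) :
    |a i| ≤ 2 * K * ‖∑ k ∈ Finset.range n, a k • z k‖ := by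
  have h1 : ‖∑ k ∈ Finset.range (i+1), a k • z k‖ ≤ K * ‖∑ k ∈ Finset.range n, a k • z k‖ :=
    hb a (i+1) n hi
  have h2 : ‖∑ k ∈ Finset.range i, a k • z k‖ ≤ K * ‖∑ k ∈ Finset.range n, a k • z k‖ :=
    hb a i n hi.le
  have key : a i • z i = (∑ k ∈ Finset.range (i+1), a k • z k) - ∑ k ∈ Finset.range i, a k • z k := by
    rw [Finset.sum_range_succ]; abel
  have : ‖a i • z i‖ ≤ 2 * K * ‖∑ k ∈ Finset.range n, a k • z k‖ := by
    rw [key]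
    calc ‖_ - _‖ ≤ ‖∑ k ∈ Finset.range (i+1), a k • z k‖ + ‖∑ k ∈ Finset.range i, a k • z k‖ :=
          norm_sub_le _ _
      _ ≤ 2 * K * ‖∑ k ∈ Finset.range n, a k • z k‖ := by linarith
  rwa [norm_smul, hn i, mul_one, Real.norm_eq_abs] at this

/-- two normalized basic sequences agreeing from `Q` on are equivalent -/
lemma seqEquiv_of_eventEq {u w : ℕ → X} {K : ℝ} (hK : 1 ≤ K)
    (hu : ∀ (a : ℕ → ℝ) (n m : ℕ), n ≤ m →
      ‖∑ i ∈ Finset.range n, a i • u i‖ ≤ K * ‖∑ i ∈ Finset.range m, a i • u i‖)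
    (hw : ∀ (a : ℕ → ℝ) (n m : ℕ), n ≤ m →
      ‖∑ i ∈ Finset.range n, a i • w i‖ ≤ K * ‖∑ i ∈ Finset.range m, a i • w i‖)
    (hun : ∀ i, ‖u i‖ = 1) (hwn : ∀ i, ‖w i‖ = 1)
    (Q : ℕ) (h : ∀ k, Q ≤ k → u k = w k) : SeqEquiv u w := by
  set C : ℝ := 1 + 4 * Q * K with hC
  have hK0 : (0:ℝ) ≤ K := le_trans zero_le_one hK
  have hC1 : (1:ℝ) ≤ C := by nlinarith [Nat.cast_nonneg (α := ℝ) Q]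
  have hCpos : (0:ℝ) < C := lt_of_lt_of_le one_pos hC1
  -- main estimate, symmetric in u,w
  have main : ∀ (p q : ℕ → X), (∀ (a : ℕ → ℝ) (n m : ℕ), n ≤ m →
      ‖∑ i ∈ Finset.range n, a i • p i‖ ≤ K * ‖∑ i ∈ Finset.range m, a i • p i‖) →
      (∀ i, ‖p i‖ = 1) → (∀ i, ‖q i‖ = 1) → (∀ k, Q ≤ k → p k = q k) →
      ∀ (a : ℕ → ℝ) (n : ℕ),
      ‖∑ i ∈ Finset.range n, a i • q i‖ ≤ C * ‖∑ i ∈ Finset.range n, a i • p i‖ := by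
    intro p q hp hpn hqn hpq a n
    have hdiff : (∑ i ∈ Finset.range n, a i • q i) - ∑ i ∈ Finset.range n, a i • p i
        = ∑ i ∈ Finset.range (min n Q), a i • (q i - p i) := by
      rw [← Finset.sum_sub_distrib]
      rw [Finset.sum_subset (Finset.range_subset_range.2 (min_le_left n Q))]
      · exact Finset.sum_congr rfl fun i _ => by rw [smul_sub]
      · intro i hi hni
        simp only [Finset.mem_range] at hi hni
        have hiQ : Q ≤ i := by omega
        rw [hpq i hiQ, sub_self, smul_zero]
    have hbound : ‖∑ i ∈ Finset.range (min n Q), a i • (q i - p i)‖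
        ≤ (((min n Q : ℕ)) : ℝ) * (4 * K * ‖∑ i ∈ Finset.range n, a i • p i‖) := by
      calc ‖∑ i ∈ Finset.range (min n Q), a i • (q i - p i)‖
          ≤ ∑ i ∈ Finset.range (min n Q), ‖a i • (q i - p i)‖ := norm_sum_le _ _
        _ ≤ ∑ _i ∈ Finset.range (min n Q), (4 * K * ‖∑ i ∈ Finset.range n, a i • p i‖) := by
            apply Finset.sum_le_sum
            intro i hi
            simp only [Finset.mem_range] at hi
            have hin : i < n := lt_of_lt_of_le hi (min_le_left n Q)
            have h1 : |a i| ≤ 2 * K * ‖∑ k ∈ Finset.range n, a k • p k‖ :=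
              coord_bound hp hpn a hin
            have h2 : ‖q i - p i‖ ≤ 2 := by
              calc ‖q i - p i‖ ≤ ‖q i‖ + ‖p i‖ := norm_sub_le _ _
                _ = 2 := by rw [hqn i, hpn i]; norm_num
            calc ‖a i • (q i - p i)‖ = |a i| * ‖q i - p i‖ := by
                  rw [norm_smul, Real.norm_eq_abs]
              _ ≤ (2 * K * ‖∑ k ∈ Finset.range n, a k • p k‖) * 2 := by
                  exact mul_le_mul h1 h2 (norm_nonneg _) (by nlinarith [norm_nonneg (∑ k ∈ Finset.range n, a k • p k)])
              _ = 4 * K * ‖∑ k ∈ Finset.range n, a k • p k‖ := by ring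
        _ = (((min n Q : ℕ)) : ℝ) * (4 * K * ‖∑ i ∈ Finset.range n, a i • p i‖) := by
            rw [Finset.sum_const, Finset.card_range, nsmul_eq_mul]
    have hminQ : ((min n Q : ℕ) : ℝ) ≤ (Q : ℝ) := by exact_mod_cast min_le_right n Q
    have : ‖∑ i ∈ Finset.range n, a i • q i‖
        ≤ ‖∑ i ∈ Finset.range n, a i • p i‖ +
          (Q : ℝ) * (4 * K * ‖∑ i ∈ Finset.range n, a i • p i‖) := by
      have := norm_sub_norm_le (∑ i ∈ Finset.range n, a i • q i)
        (∑ i ∈ Finset.range n, a i • p i)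
      have h3 : ‖(∑ i ∈ Finset.range n, a i • q i) - ∑ i ∈ Finset.range n, a i • p i‖
          ≤ (Q : ℝ) * (4 * K * ‖∑ i ∈ Finset.range n, a i • p i‖) := by
        rw [hdiff]
        refine hbound.trans ?_
        apply mul_le_mul_of_nonneg_right hminQ
        nlinarith [norm_nonneg (∑ i ∈ Finset.range n, a i • p i)]
      linarith
    calc ‖∑ i ∈ Finset.range n, a i • q i‖
        ≤ ‖∑ i ∈ Finset.range n, a i • p i‖ +
          (Q : ℝ) * (4 * K * ‖∑ i ∈ Finset.range n, a i • p i‖) := this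
      _ = C * ‖∑ i ∈ Finset.range n, a i • p i‖ := by rw [hC]; ring
  refine ⟨C, hC1, fun a n => ?_⟩
  have h1 := main u w hu hun hwn h a n
  have h2 := main w u hw hwn hun (fun k hk => (h k hk).symm) a n
  constructor
  · rw [div_mul_eq_mul_div, div_le_iff₀ hCpos, mul_comm _ C]
    simpa using h2
  · exact h1

lemma findGreatest_interval {M : ℕ → ℕ} (hM : StrictMono M) {p i : ℕ}
    (h1 : M p ≤ i) (h2 : i < M (p+1)) :
    Nat.findGreatest (fun k => M k ≤ i) i = p := by
  rw [Nat.findGreatest_eq_iff]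
  refine ⟨le_trans hM.le_apply h1, fun _ => h1, fun n hn hni hMn => ?_⟩
  have : M (p+1) ≤ M n := hM.monotone hn
  omega

lemma block_sum_eq {e z : ℕ → X} {a : ℕ → ℝ} {M : ℕ → ℕ} (hM : StrictMono M)
    (hz : ∀ k, z k = ∑ i ∈ Finset.Ico (M k) (M (k+1)), a i • e i) (b : ℕ → ℝ) (p : ℕ) :
    ∑ k ∈ Finset.range p, b k • z k
      = ∑ i ∈ Finset.range (M p),
          (if i < M 0 then 0 else b (Nat.findGreatest (fun k => M k ≤ i) i) * a i) • e i := by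
  induction p with
  | zero =>
    rw [Finset.sum_range_zero]
    symm
    apply Finset.sum_eq_zero
    intro i hi
    simp only [Finset.mem_range] at hi
    rw [if_pos hi, zero_smul]
  | succ p ih =>
    rw [Finset.sum_range_succ, ih]
    have hle : M p ≤ M (p+1) := (hM.monotone (Nat.le_succ p))
    rw [Finset.range_eq_Ico, Finset.range_eq_Ico,
      ← Finset.sum_Ico_consecutive _ (Nat.zero_le (M p)) hle]
    congr 1
    rw [hz p, Finset.smul_sum]
    apply Finset.sum_congr rfl
    intro i hi
    simp only [Finset.mem_Ico] at hi
    have h0 : ¬ i < M 0 := by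
      have : M 0 ≤ M p := hM.monotone (Nat.zero_le p)
      omega
    rw [if_neg h0, findGreatest_interval hM hi.1 hi.2, smul_smul]

/-- A block basic sequence of a basic sequence is basic with the same constant. -/
lemma blockBasis_basic {e z : ℕ → X} {K : ℝ}
    (he : ∀ (a : ℕ → ℝ) (n m : ℕ), n ≤ m →
      ‖∑ i ∈ Finset.range n, a i • e i‖ ≤ K * ‖∑ i ∈ Finset.range m, a i • e i‖)
    {a : ℕ → ℝ} {M : ℕ → ℕ} (hM : StrictMono M)
    (hz : ∀ k, z k = ∑ i ∈ Finset.Ico (M k) (M (k+1)), a i • e i) :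
    ∀ (b : ℕ → ℝ) (p q : ℕ), p ≤ q →
      ‖∑ k ∈ Finset.range p, b k • z k‖ ≤ K * ‖∑ k ∈ Finset.range q, b k • z k‖ := by
  intro b p q hpq
  rw [block_sum_eq hM hz b p, block_sum_eq hM hz b q]
  exact he _ (M p) (M q) (hM.monotone hpq)

/-- If the tails from `N` on are equivalent, so are the full sequences. -/
lemma seqEquiv_of_tail {x y : ℕ → X} {K : ℝ} (hK : 1 ≤ K)
    (hxb : ∀ (a : ℕ → ℝ) (n m : ℕ), n ≤ m →
      ‖∑ i ∈ Finset.range n, a i • x i‖ ≤ K * ‖∑ i ∈ Finset.range m, a i • x i‖)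
    (hyb : ∀ (a : ℕ → ℝ) (n m : ℕ), n ≤ m →
      ‖∑ i ∈ Finset.range n, a i • y i‖ ≤ K * ‖∑ i ∈ Finset.range m, a i • y i‖)
    (hxn : ∀ i, ‖x i‖ = 1) (hyn : ∀ i, ‖y i‖ = 1) (N : ℕ)
    (h : SeqEquiv (fun i => x (N + i)) (fun i => y (N + i))) : SeqEquiv x y := by
  obtain ⟨C, hC1, hC⟩ := h
  have hCpos : (0:ℝ) < C := lt_of_lt_of_le one_pos hC1
  have hK0 : (0:ℝ) ≤ K := le_trans zero_le_one hK
  set C' : ℝ := 2*K*N + C*(1+2*K*N) with hC'def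
  have hN0 : (0:ℝ) ≤ (N:ℝ) := Nat.cast_nonneg N
  have h2KN : (0:ℝ) ≤ 2*K*N := mul_nonneg (mul_nonneg (by norm_num) hK0) hN0
  have hCKN : (0:ℝ) ≤ C*(1+2*K*N) := mul_nonneg hCpos.le (by linarith)
  have hCKN' : C*(1+2*K*N) = C + C*(2*K*N) := by ring
  have hC2KN : (0:ℝ) ≤ C*(2*K*N) := by nlinarith
  have hC'1 : (1:ℝ) ≤ C' := by rw [hC'def, hCKN']; linarith
  have hC'pos : (0:ℝ) < C' := lt_of_lt_of_le one_pos hC'1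
  -- directed tail bounds
  have htail1 : ∀ (a' : ℕ → ℝ) (n' : ℕ),
      ‖∑ i ∈ Finset.range n', a' i • x (N + i)‖ ≤ C * ‖∑ i ∈ Finset.range n', a' i • y (N + i)‖ := by
    intro a' n'
    have := (hC a' n').1
    rw [div_mul_eq_mul_div, div_le_iff₀ hCpos] at this
    simpa [mul_comm] using this
  have htail2 : ∀ (a' : ℕ → ℝ) (n' : ℕ),
      ‖∑ i ∈ Finset.range n', a' i • y (N + i)‖ ≤ C * ‖∑ i ∈ Finset.range n', a' i • x (N + i)‖ :=
    fun a' n' => (hC a' n').2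
  -- symmetric main estimate
  have main : ∀ p q : ℕ → X,
      (∀ (a : ℕ → ℝ) (n m : ℕ), n ≤ m →
        ‖∑ i ∈ Finset.range n, a i • q i‖ ≤ K * ‖∑ i ∈ Finset.range m, a i • q i‖) →
      (∀ i, ‖p i‖ = 1) → (∀ i, ‖q i‖ = 1) →
      (∀ (a' : ℕ → ℝ) (n' : ℕ),
        ‖∑ i ∈ Finset.range n', a' i • p (N + i)‖ ≤ C * ‖∑ i ∈ Finset.range n', a' i • q (N + i)‖) →
      ∀ (a : ℕ → ℝ) (n : ℕ),
        ‖∑ i ∈ Finset.range n, a i • p i‖ ≤ C' * ‖∑ i ∈ Finset.range n, a i • q i‖ := by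
    intro p q hqb hpn hqn htl a n
    set Sq := ∑ i ∈ Finset.range n, a i • q i with hSq
    have hSq0 : (0:ℝ) ≤ ‖Sq‖ := norm_nonneg _
    -- head bound: any sum of ≤ N terms among first n coords
    have hhead : ∀ (z : ℕ → X), (∀ i, ‖z i‖ = 1) → ∀ m, m ≤ N → m ≤ n →
        ‖∑ i ∈ Finset.range m, a i • z i‖ ≤ (N:ℝ) * (2 * K * ‖Sq‖) := by
      intro z hzn m hmN hmn
      calc ‖∑ i ∈ Finset.range m, a i • z i‖ ≤ ∑ i ∈ Finset.range m, ‖a i • z i‖ :=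
            norm_sum_le _ _
        _ ≤ ∑ _i ∈ Finset.range m, (2 * K * ‖Sq‖) := by
            apply Finset.sum_le_sum
            intro i hi
            simp only [Finset.mem_range] at hi
            rw [norm_smul, hzn i, mul_one, Real.norm_eq_abs]
            exact coord_bound hqb hqn a (lt_of_lt_of_le hi hmn)
        _ = (m:ℝ) * (2 * K * ‖Sq‖) := by
            rw [Finset.sum_const, Finset.card_range, nsmul_eq_mul]
        _ ≤ (N:ℝ) * (2 * K * ‖Sq‖) := by
            apply mul_le_mul_of_nonneg_right (by exact_mod_cast hmN)
            nlinarith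
    by_cases hn : n ≤ N
    · calc ‖∑ i ∈ Finset.range n, a i • p i‖ ≤ (N:ℝ) * (2 * K * ‖Sq‖) :=
            hhead p hpn n hn le_rfl
        _ ≤ C' * ‖Sq‖ := by
            rw [hC'def]
            nlinarith [mul_nonneg hCKN hSq0, mul_nonneg h2KN hSq0]
    · push_neg at hn
      have hNn : N ≤ n := hn.le
      -- split sums
      have hsplit : ∀ z : ℕ → X, ∑ i ∈ Finset.range n, a i • z i
          = (∑ i ∈ Finset.range N, a i • z i) + ∑ i ∈ Finset.Ico N n, a i • z i := by
        intro z
        rw [Finset.range_eq_Ico, Finset.range_eq_Ico, ← Finset.sum_Ico_consecutive _ (Nat.zero_le N) hNn]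
      have hIco : ∀ z : ℕ → X, ∑ i ∈ Finset.Ico N n, a i • z i
          = ∑ j ∈ Finset.range (n - N), a (N + j) • z (N + j) := by
        intro z
        rw [Finset.sum_Ico_eq_sum_range]
      have hT : ‖∑ i ∈ Finset.Ico N n, a i • p i‖ ≤ C * ‖∑ i ∈ Finset.Ico N n, a i • q i‖ := by
        rw [hIco p, hIco q]
        exact htl (fun j => a (N + j)) (n - N)
      have hHq : ‖∑ i ∈ Finset.range N, a i • q i‖ ≤ (N:ℝ) * (2 * K * ‖Sq‖) :=
        hhead q hqn N le_rfl hNn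
      have hHp : ‖∑ i ∈ Finset.range N, a i • p i‖ ≤ (N:ℝ) * (2 * K * ‖Sq‖) :=
        hhead p hpn N le_rfl hNn
      have hTq : ‖∑ i ∈ Finset.Ico N n, a i • q i‖ ≤ ‖Sq‖ + (N:ℝ) * (2 * K * ‖Sq‖) := by
        have : ∑ i ∈ Finset.Ico N n, a i • q i = Sq - ∑ i ∈ Finset.range N, a i • q i := by
          rw [hSq, hsplit q]; abel
        rw [this]
        calc ‖Sq - ∑ i ∈ Finset.range N, a i • q i‖
            ≤ ‖Sq‖ + ‖∑ i ∈ Finset.range N, a i • q i‖ := norm_sub_le _ _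
          _ ≤ ‖Sq‖ + (N:ℝ) * (2 * K * ‖Sq‖) := by linarith
      calc ‖∑ i ∈ Finset.range n, a i • p i‖
          ≤ ‖∑ i ∈ Finset.range N, a i • p i‖ + ‖∑ i ∈ Finset.Ico N n, a i • p i‖ := by
            rw [hsplit p]; exact norm_add_le _ _
        _ ≤ (N:ℝ) * (2 * K * ‖Sq‖) + C * (‖Sq‖ + (N:ℝ) * (2 * K * ‖Sq‖)) := by
            have := le_trans hT (mul_le_mul_of_nonneg_left hTq hCpos.le)
            linarith
        _ = C' * ‖Sq‖ := by rw [hC'def]; ring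
  refine ⟨C', hC'1, fun a n => ?_⟩
  have h1 := main x y hyb hxn hyn htail1 a n
  have h2 := main y x hxb hyn hxn htail2 a n
  constructor
  · rw [div_mul_eq_mul_div, div_le_iff₀ hC'pos, mul_comm _ C']
    simpa using h1
  · exact h2

lemma exists_tail_witness {x y : ℕ → X} {K : ℝ} (hK : 1 ≤ K)
    (hxb : ∀ (a : ℕ → ℝ) (n m : ℕ), n ≤ m →
      ‖∑ i ∈ Finset.range n, a i • x i‖ ≤ K * ‖∑ i ∈ Finset.range m, a i • x i‖)
    (hyb : ∀ (a : ℕ → ℝ) (n m : ℕ), n ≤ m →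
      ‖∑ i ∈ Finset.range n, a i • y i‖ ≤ K * ‖∑ i ∈ Finset.range m, a i • y i‖)
    (hxn : ∀ i, ‖x i‖ = 1) (hyn : ∀ i, ‖y i‖ = 1)
    (hne : ¬ SeqEquiv x y) (N : ℕ) (C : ℝ) (hC : 1 ≤ C) :
    ∃ (n : ℕ) (a : ℕ → ℝ), N < n ∧ (∀ i, i < N → a i = 0) ∧
      ¬((1/C) * ‖∑ i ∈ Finset.range n, a i • x i‖ ≤ ‖∑ i ∈ Finset.range n, a i • y i‖ ∧
        ‖∑ i ∈ Finset.range n, a i • y i‖ ≤ C * ‖∑ i ∈ Finset.range n, a i • x i‖) := by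
  have htail : ¬ SeqEquiv (fun i => x (N + i)) (fun i => y (N + i)) := by
    intro h
    exact hne (seqEquiv_of_tail hK hxb hyb hxn hyn N h)
  have : ∃ (a' : ℕ → ℝ) (n' : ℕ),
      ¬((1/C) * ‖∑ i ∈ Finset.range n', a' i • x (N + i)‖ ≤ ‖∑ i ∈ Finset.range n', a' i • y (N + i)‖ ∧
        ‖∑ i ∈ Finset.range n', a' i • y (N + i)‖ ≤ C * ‖∑ i ∈ Finset.range n', a' i • x (N + i)‖) := by
    by_contra hcon
    push_neg at hcon
    exact htail ⟨C, hC, fun a' n' => hcon a' n'⟩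
  obtain ⟨a', n', hbad⟩ := this
  have hn'pos : 0 < n' := by
    rcases Nat.eq_zero_or_pos n' with h0 | h; swap; · exact h
    subst h0
    simp at hbad
  refine ⟨N + n', fun i => if i < N then 0 else a' (i - N), by omega, fun i hi => if_pos hi, ?_⟩
  have hx' : ∑ i ∈ Finset.range (N + n'), (if i < N then 0 else a' (i - N)) • x i
      = ∑ i ∈ Finset.range n', a' i • x (N + i) := by
    rw [Finset.range_eq_Ico, ← Finset.sum_Ico_consecutive _ (Nat.zero_le N) (Nat.le_add_right N n')]
    have h1 : ∑ i ∈ Finset.Ico 0 N, (if i < N then 0 else a' (i - N)) • x i = 0 := by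
      apply Finset.sum_eq_zero
      intro i hi
      simp only [Finset.mem_Ico] at hi
      rw [if_pos hi.2, zero_smul]
    rw [h1, zero_add, Finset.sum_Ico_eq_sum_range, Nat.add_sub_cancel_left,
      Finset.range_eq_Ico]
    apply Finset.sum_congr rfl
    intro j _
    have : ¬ (N + j < N) := by omega
    rw [if_neg this, Nat.add_sub_cancel_left]
  have hy' : ∑ i ∈ Finset.range (N + n'), (if i < N then 0 else a' (i - N)) • y i
      = ∑ i ∈ Finset.range n', a' i • y (N + i) := by
    rw [Finset.range_eq_Ico, ← Finset.sum_Ico_consecutive _ (Nat.zero_le N) (Nat.le_add_right N n')]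
    have h1 : ∑ i ∈ Finset.Ico 0 N, (if i < N then 0 else a' (i - N)) • y i = 0 := by
      apply Finset.sum_eq_zero
      intro i hi
      simp only [Finset.mem_Ico] at hi
      rw [if_pos hi.2, zero_smul]
    rw [h1, zero_add, Finset.sum_Ico_eq_sum_range, Nat.add_sub_cancel_left,
      Finset.range_eq_Ico]
    apply Finset.sum_congr rfl
    intro j _
    have : ¬ (N + j < N) := by omega
    rw [if_neg this, Nat.add_sub_cancel_left]
  rw [hx', hy']
  exact hbad

/-- Mixing two block decompositions chunk-wise gives a block decomposition. -/
lemma mixed_block {e x y : ℕ → X} {ax ay : ℕ → ℝ} {mx my : ℕ → ℕ}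
    (hmx : StrictMono mx) (hmy : StrictMono my)
    (hxk : ∀ k, x k = ∑ i ∈ Finset.Ico (mx k) (mx (k+1)), ax i • e i)
    (hyk : ∀ k, y k = ∑ i ∈ Finset.Ico (my k) (my (k+1)), ay i • e i)
    (σ : ℕ → ℕ) (c : ℕ → Bool)
    (hstep : ∀ k, (c (k+1) = c k ∧ σ (k+1) = σ k + 1) ∨
      max (mx (σ k + 1)) (my (σ k + 1)) ≤ min (mx (σ (k+1))) (my (σ (k+1)))) :
    ∃ (b : ℕ → ℝ) (M : ℕ → ℕ), StrictMono M ∧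
      ∀ k, (if c k then x (σ k) else y (σ k)) =
        ∑ i ∈ Finset.Ico (M k) (M (k+1)), b i • e i := by
  classical
  set M : ℕ → ℕ := fun k => if c k then mx (σ k) else my (σ k) with hM
  set b : ℕ → ℝ := fun i =>
    if ∃ k, c k = true ∧ mx (σ k) ≤ i ∧ i < mx (σ k + 1) then ax i
    else if ∃ k, c k = false ∧ my (σ k) ≤ i ∧ i < my (σ k + 1) then ay i else 0 with hb
  -- the family upper end is below the next M
  have hF6 : ∀ k, (if c k then mx (σ k + 1) else my (σ k + 1)) ≤ M (k+1) := by
    intro k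
    rcases hstep k with ⟨hc, hσ⟩ | hsep
    · rw [hM]
      simp only [hc, hσ]
      cases hck : c k <;> simp [hck]
    · rw [hM]
      cases hck : c k <;> cases hck1 : c (k+1) <;> simp [hck, hck1] <;>
        [exact le_trans (le_trans (le_max_right _ _) hsep) (min_le_right _ _);
         exact le_trans (le_trans (le_max_right _ _) hsep) (min_le_left _ _);
         exact le_trans (le_trans (le_max_left _ _) hsep) (min_le_right _ _);
         exact le_trans (le_trans (le_max_left _ _) hsep) (min_le_left _ _)]
  have hMmono : StrictMono M := by
    apply strictMono_nat_of_lt_succ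
    intro k
    have h1 : M k < (if c k then mx (σ k + 1) else my (σ k + 1)) := by
      rw [hM]
      cases hck : c k <;> simp [hck]
      · exact hmy (Nat.lt_succ_self _)
      · exact hmx (Nat.lt_succ_self _)
    exact lt_of_lt_of_le h1 (hF6 k)
  -- disjointness of the M-intervals
  have hG : ∀ k k' i, M k ≤ i → i < M (k+1) → M k' ≤ i → i < M (k'+1) → k = k' := by
    intro k k' i h1 h2 h3 h4
    by_contra hne
    rcases Nat.lt_or_ge k k' with h | h
    · have : M (k+1) ≤ M k' := hMmono.monotone h
      omega
    · have hlt : k' < k := by omega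
      have : M (k'+1) ≤ M k := hMmono.monotone hlt
      omega
  refine ⟨b, M, hMmono, ?_⟩
  intro k
  -- family interval of k is inside [M k, M (k+1))
  have hsub : (Finset.Ico (if c k then mx (σ k) else my (σ k))
      (if c k then mx (σ k + 1) else my (σ k + 1))) ⊆ Finset.Ico (M k) (M (k+1)) := by
    apply Finset.Ico_subset_Ico
    · rw [hM]
    · exact hF6 k
  -- i in the M-interval of k and in a family interval of k' forces k' = k
  have hloc : ∀ k' i, M k ≤ i → i < M (k+1) →
      ((c k' = true ∧ mx (σ k') ≤ i ∧ i < mx (σ k' + 1)) ∨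
       (c k' = false ∧ my (σ k') ≤ i ∧ i < my (σ k' + 1))) → k' = k := by
    intro k' i h1 h2 hcase
    have hMk' : M k' ≤ i ∧ i < M (k'+1) := by
      rcases hcase with ⟨hc', hlo, hhi⟩ | ⟨hc', hlo, hhi⟩
      · constructor
        · rw [hM]; simpa [hc'] using hlo
        · exact lt_of_lt_of_le hhi (by simpa [hc'] using hF6 k')
      · constructor
        · rw [hM]; simpa [hc'] using hlo
        · exact lt_of_lt_of_le hhi (by simpa [hc'] using hF6 k')
    exact (hG k k' i h1 h2 hMk'.1 hMk'.2).symm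
  cases hck : c k with
  | true =>
    simp only [if_pos rfl]
    rw [hxk (σ k)]
    have key : ∑ i ∈ Finset.Ico (mx (σ k)) (mx (σ k + 1)), b i • e i
        = ∑ i ∈ Finset.Ico (M k) (M (k+1)), b i • e i := by
      apply Finset.sum_subset
      · have := hsub; rwa [hck] at this; 
      · intro i hi hni
        simp only [Finset.mem_Ico] at hi hni
        have hb0 : b i = 0 := by
          simp only [hb]
          rw [if_neg, if_neg]
          · rintro ⟨k', hc', hlo, hhi⟩
            have hk'k : k' = k := hloc k' i hi.1 hi.2 (Or.inr ⟨hc', hlo, hhi⟩)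
            rw [hk'k, hck] at hc'
            simp at hc'
          · rintro ⟨k', hc', hlo, hhi⟩
            have hk'k : k' = k := hloc k' i hi.1 hi.2 (Or.inl ⟨hc', hlo, hhi⟩)
            rw [hk'k] at hlo hhi
            exact hni ⟨hlo, hhi⟩
        rw [hb0, zero_smul]
    rw [← key]
    apply Finset.sum_congr rfl
    intro i hi
    simp only [Finset.mem_Ico] at hi
    have hbi : b i = ax i := by
      simp only [hb]
      rw [if_pos ⟨k, hck, hi.1, hi.2⟩]
    rw [hbi]
  | false =>
    rw [if_neg (by simp)]
    rw [hyk (σ k)]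
    have key : ∑ i ∈ Finset.Ico (my (σ k)) (my (σ k + 1)), b i • e i
        = ∑ i ∈ Finset.Ico (M k) (M (k+1)), b i • e i := by
      apply Finset.sum_subset
      · have := hsub; rwa [hck] at this
      · intro i hi hni
        simp only [Finset.mem_Ico] at hi hni
        have hb0 : b i = 0 := by
          simp only [hb]
          rw [if_neg, if_neg]
          · rintro ⟨k', hc', hlo, hhi⟩
            have hk'k : k' = k := hloc k' i hi.1 hi.2 (Or.inr ⟨hc', hlo, hhi⟩)
            rw [hk'k] at hlo hhi
            exact hni ⟨hlo, hhi⟩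
          · rintro ⟨k', hc', hlo, hhi⟩
            have hk'k : k' = k := hloc k' i hi.1 hi.2 (Or.inl ⟨hc', hlo, hhi⟩)
            rw [hk'k, hck] at hc'
            exact (Bool.false_ne_true hc').elim
        rw [hb0, zero_smul]
    rw [← key]
    apply Finset.sum_congr rfl
    intro i hi
    simp only [Finset.mem_Ico] at hi
    have hbi : b i = ay i := by
      simp only [hb]
      rw [if_neg, if_pos ⟨k, hck, hi.1, hi.2⟩]
      rintro ⟨k', hc', hlo, hhi⟩
      have hk'k : k' = k := hloc k' i (le_trans (by rw [hM]; simp [hck]) hi.1)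
        (lt_of_lt_of_le hi.2 (by simpa [hck] using hF6 k)) (Or.inl ⟨hc', hlo, hhi⟩)
      rw [hk'k, hck] at hc'
      exact (Bool.false_ne_true hc').elim
    rw [hbi]

/-- if a normalized basic sequence `e` admits two inequivalent
normalized block basic sequences, then `E₀` Borel (indeed continuously) reduces
to equivalence of normalized block bases of `e`. -/
theorem E0_reduces_to_block_basis_equivalence
    [CompleteSpace X]
    (e : ℕ → X) (he : IsBasicSeq e) (hen : ∀ i, ‖e i‖ = 1)
    (x y : ℕ → X)
    (hx : IsBlockBasis e x) (hxn : ∀ i, ‖x i‖ = 1)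
    (hy : IsBlockBasis e y) (hyn : ∀ i, ‖y i‖ = 1)
    (hne : ¬ SeqEquiv x y) :
    ∃ f : (ℕ → Bool) → (ℕ → X), Continuous f ∧
      (∀ α, IsBlockBasis e (f α) ∧ ∀ i, ‖f α i‖ = 1) ∧
      ∀ α β, E0Rel α β ↔ SeqEquiv (f α) (f β) := by
  classical
  obtain ⟨he0, K, hK1, heb⟩ := he
  obtain ⟨ax, mx, hmx, hxk'⟩ := hx
  obtain ⟨ay, my, hmy, hyk'⟩ := hy
  have hxk : ∀ k, x k = ∑ i ∈ Finset.Ico (mx k) (mx (k+1)), ax i • e i := fun k => (hxk' k).2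
  have hyk : ∀ k, y k = ∑ i ∈ Finset.Ico (my k) (my (k+1)), ay i • e i := fun k => (hyk' k).2
  have hxb := blockBasis_basic heb hmx hxk
  have hyb := blockBasis_basic heb hmy hyk
  -- bad witnesses beyond any N, for constant j+1
  have hw : ∀ (N j : ℕ), ∃ (n : ℕ) (a : ℕ → ℝ), N < n ∧ (∀ i, i < N → a i = 0) ∧
      ¬((1/((j:ℝ)+1)) * ‖∑ i ∈ Finset.range n, a i • x i‖ ≤ ‖∑ i ∈ Finset.range n, a i • y i‖ ∧
        ‖∑ i ∈ Finset.range n, a i • y i‖ ≤ ((j:ℝ)+1) * ‖∑ i ∈ Finset.range n, a i • x i‖) :=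
    fun N j => exists_tail_witness hK1 hxb hyb hxn hyn hne N ((j:ℝ)+1)
      (by have : (0:ℝ) ≤ (j:ℝ) := Nat.cast_nonneg j; linarith)
  choose nf af hnf haf hbad using hw
  -- recursive chunk data
  set NN : ℕ → ℕ := fun j => Nat.rec 0 (fun j' Nj => max (mx (nf Nj j')) (my (nf Nj j'))) j
    with hNN
  set E : ℕ → ℕ := fun j => nf (NN j) j with hE
  set A : ℕ → ℕ → ℝ := fun j => af (NN j) j with hA
  have hNNsucc : ∀ j, NN (j+1) = max (mx (E j)) (my (E j)) := fun j => rfl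
  have hNE : ∀ j, NN j < E j := fun j => hnf (NN j) j
  have hA0 : ∀ j i, i < NN j → A j i = 0 := fun j => haf (NN j) j
  have hENN : ∀ j, E j ≤ NN (j+1) := by
    intro j
    rw [hNNsucc]
    exact le_trans hmx.le_apply (le_max_left _ _)
  have hNNmono : StrictMono NN :=
    strictMono_nat_of_lt_succ fun j => lt_of_lt_of_le (hNE j) (hENN j)
  -- position-space chunk starts
  set q : ℕ → ℕ := fun j => ∑ t ∈ Finset.range j, (E t - NN t) with hq
  have hqsucc : ∀ j, q (j+1) = q j + (E j - NN j) := fun j => Finset.sum_range_succ _ j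
  have hq0 : q 0 = 0 := rfl
  have hqmono : StrictMono q := by
    apply strictMono_nat_of_lt_succ
    intro j
    have := hNE j
    rw [hqsucc]
    omega
  set co : ℕ → ℕ := fun k => Nat.findGreatest (fun j => q j ≤ k) k with hco
  set σ : ℕ → ℕ := fun k => NN (co k) + (k - q (co k)) with hσ
  have hcomem : ∀ k, q (co k) ≤ k ∧ k < q (co k + 1) := by
    intro k
    have h1 : q (co k) ≤ k :=
      Nat.findGreatest_spec (P := fun j => q j ≤ k) (Nat.zero_le k)
        (show q 0 ≤ k by rw [hq0]; exact Nat.zero_le k)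
    refine ⟨h1, ?_⟩
    by_contra hcon
    push_neg at hcon
    have hk1 : co k + 1 ≤ k := le_trans hqmono.le_apply hcon
    have h2 : co k + 1 ≤ co k := Nat.le_findGreatest (P := fun j => q j ≤ k) hk1 hcon
    omega
  have hcoeq : ∀ j k, q j ≤ k → k < q (j+1) → co k = j := by
    intro j k h1 h2
    exact findGreatest_interval hqmono h1 h2
  have hσmem : ∀ k, NN (co k) ≤ σ k ∧ σ k < E (co k) := by
    intro k
    obtain ⟨h1, h2⟩ := hcomem k
    rw [hqsucc] at h2
    have := hNE (co k)
    constructor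
    · simp only [hσ]; omega
    · simp only [hσ]; omega
  -- the step condition for mixing
  have hstep : ∀ (α : ℕ → Bool) (k : ℕ),
      ((fun k => α (co k)) (k+1) = (fun k => α (co k)) k ∧ σ (k+1) = σ k + 1) ∨
      max (mx (σ k + 1)) (my (σ k + 1)) ≤ min (mx (σ (k+1))) (my (σ (k+1))) := by
    intro α k
    obtain ⟨h1, h2⟩ := hcomem k
    by_cases hkb : k + 1 < q (co k + 1)
    · left
      have hco1 : co (k+1) = co k := hcoeq (co k) (k+1) (by omega) hkb
      refine ⟨by simp [hco1], ?_⟩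
      simp only [hσ, hco1]
      omega
    · right
      have hkq : k + 1 = q (co k + 1) := by omega
      have hco1 : co (k+1) = co k + 1 := by
        apply hcoeq
        · omega
        · rw [hqsucc (co k + 1)]
          have := hNE (co k + 1)
          omega
      have hσ1 : σ (k+1) = NN (co k + 1) := by
        simp only [hσ, hco1]
        omega
      have hσk1 : σ k + 1 ≤ E (co k) := (hσmem k).2
      rw [hσ1]
      have hx1 : mx (σ k + 1) ≤ mx (E (co k)) := hmx.monotone hσk1
      have hy1 : my (σ k + 1) ≤ my (E (co k)) := hmy.monotone hσk1
      have h3a : mx (E (co k)) ≤ NN (co k + 1) := by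
        rw [hNNsucc (co k)]; exact le_max_left _ _
      have h3b : my (E (co k)) ≤ NN (co k + 1) := by
        rw [hNNsucc (co k)]; exact le_max_right _ _
      have h4 : NN (co k + 1) ≤ mx (NN (co k + 1)) := hmx.le_apply
      have h5 : NN (co k + 1) ≤ my (NN (co k + 1)) := hmy.le_apply
      simp only [max_le_iff, le_min_iff]
      omega
  -- the reduction
  set f : (ℕ → Bool) → ℕ → X := fun α k => if α (co k) then x (σ k) else y (σ k) with hf
  have hfn : ∀ α k, ‖f α k‖ = 1 := by
    intro α k
    rw [hf]
    by_cases h : α (co k) <;> simp [h, hxn, hyn]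
  have hfblock : ∀ α, ∃ (b : ℕ → ℝ) (M : ℕ → ℕ), StrictMono M ∧
      ∀ k, f α k = ∑ i ∈ Finset.Ico (M k) (M (k+1)), b i • e i := by
    intro α
    obtain ⟨b, M, hM, hMk⟩ := mixed_block hmx hmy hxk hyk σ (fun k => α (co k)) (hstep α)
    exact ⟨b, M, hM, fun k => hMk k⟩
  have hfbasic : ∀ α (b : ℕ → ℝ) (p p' : ℕ), p ≤ p' →
      ‖∑ k ∈ Finset.range p, b k • f α k‖ ≤ K * ‖∑ k ∈ Finset.range p', b k • f α k‖ := by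
    intro α
    obtain ⟨b, M, hM, hMk⟩ := hfblock α
    exact blockBasis_basic heb hM hMk
  refine ⟨f, ?_, ?_, ?_⟩
  · -- continuity
    apply continuous_pi
    intro k
    exact (continuous_of_discreteTopology
      (f := fun b : Bool => if b then x (σ k) else y (σ k))).comp (continuous_apply (co k))
  · -- block basis and normalization
    intro α
    refine ⟨?_, hfn α⟩
    obtain ⟨b, M, hM, hMk⟩ := hfblock α
    refine ⟨b, M, hM, fun k => ⟨?_, hMk k⟩⟩
    intro h0
    have := hfn α k
    rw [h0, norm_zero] at this
    norm_num at this
  · -- the E₀ reduction property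
    intro α β
    constructor
    · rintro ⟨n, hn⟩
      apply seqEquiv_of_eventEq hK1 (hfbasic α) (hfbasic β) (hfn α) (hfn β) (q n)
      intro k hk
      have hcon : n ≤ co k := Nat.le_findGreatest (P := fun j' => q j' ≤ k) (le_trans hqmono.le_apply hk) hk
      rw [hf]
      simp only [hn (co k) hcon]
    · intro hseq
      by_contra hne0
      simp only [E0Rel, not_exists, not_forall] at hne0
      obtain ⟨C, hC1, hCin⟩ := hseq
      obtain ⟨j, hjge, hjne⟩ := hne0 ⌈C⌉₊
      have hCpos : (0:ℝ) < C := lt_of_lt_of_le one_pos hC1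
      have hCj : C ≤ (j:ℝ) + 1 := by
        refine le_trans (Nat.le_ceil C) ?_
        have : (⌈C⌉₊ : ℝ) ≤ (j : ℝ) := Nat.cast_le.2 hjge
        linarith
      have hj1pos : (0:ℝ) < (j:ℝ) + 1 := by positivity
      set bb : ℕ → ℝ := fun k => if q j ≤ k ∧ k < q (j+1) then A j (σ k) else 0 with hbb
      -- the chunk-sum computation
      have hcompz : ∀ z : ℕ → X, ∑ k ∈ Finset.range (q (j+1)), bb k • z (σ k)
          = ∑ i ∈ Finset.range (E j), A j i • z i := by
        intro z
        have hqj : q j ≤ q (j+1) := (hqmono.monotone (Nat.le_succ j))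
        rw [Finset.range_eq_Ico, Finset.range_eq_Ico, ← Finset.sum_Ico_consecutive _ (Nat.zero_le (q j)) hqj]
        have h1 : ∑ k ∈ Finset.Ico 0 (q j), bb k • z (σ k) = 0 := by
          apply Finset.sum_eq_zero
          intro k hk
          simp only [Finset.mem_Ico] at hk
          rw [hbb]
          simp only
          rw [if_neg (by omega), zero_smul]
        rw [h1, zero_add]
        have h2 : ∀ k ∈ Finset.Ico (q j) (q (j+1)), bb k • z (σ k)
            = A j (NN j + (k - q j)) • z (NN j + (k - q j)) := by
          intro k hk
          simp only [Finset.mem_Ico] at hk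
          have hcok : co k = j := hcoeq j k hk.1 hk.2
          rw [hbb]
          simp only
          rw [if_pos ⟨hk.1, hk.2⟩, hσ]
          simp only [hcok]
        rw [Finset.sum_congr rfl h2, Finset.sum_Ico_eq_sum_range]
        have h3 : ∀ t ∈ Finset.range (q (j+1) - q j),
            A j (NN j + (q j + t - q j)) • z (NN j + (q j + t - q j))
            = A j (NN j + t) • z (NN j + t) := by
          intro t _
          congr 2 <;> omega
        rw [Finset.sum_congr rfl h3]
        have hlen : q (j+1) - q j = E j - NN j := by
          rw [hqsucc]; omega
        rw [hlen]
        -- compare with the full range sum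
        have hNEj : NN j ≤ E j := (hNE j).le
        have h4 : ∑ i ∈ Finset.Ico 0 (NN j), A j i • z i = 0 := by
          apply Finset.sum_eq_zero
          intro i hi
          simp only [Finset.mem_Ico] at hi
          rw [hA0 j i hi.2, zero_smul]
        calc ∑ t ∈ Finset.range (E j - NN j), A j (NN j + t) • z (NN j + t)
            = ∑ i ∈ Finset.Ico (NN j) (E j), A j i • z i :=
              (Finset.sum_Ico_eq_sum_range (f := fun i => A j i • z i) (m := NN j)
                (n := E j)).symm
          _ = ∑ i ∈ Finset.Ico 0 (E j), A j i • z i := by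
              rw [← Finset.sum_Ico_consecutive _ (Nat.zero_le (NN j)) hNEj, h4, zero_add]
      -- identify the two sums
      have hsums : ∀ γ : ℕ → Bool, ∑ k ∈ Finset.range (q (j+1)), bb k • f γ k
          = if γ j then ∑ i ∈ Finset.range (E j), A j i • x i
            else ∑ i ∈ Finset.range (E j), A j i • y i := by
        intro γ
        have h2 : ∀ k ∈ Finset.range (q (j+1)), bb k • f γ k
            = bb k • (if γ j then x (σ k) else y (σ k)) := by
          intro k hk
          by_cases hkin : q j ≤ k ∧ k < q (j+1)
          · have hcok : co k = j := hcoeq j k hkin.1 hkin.2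
            rw [hf]
            simp only [hcok]
          · have : bb k = 0 := by rw [hbb]; simp only; rw [if_neg hkin]
            rw [this, zero_smul, zero_smul]
        rw [Finset.sum_congr rfl h2]
        by_cases hγ : γ j
        · simp only [hγ, if_true]
          exact hcompz x
        · simp only [hγ, if_false]
          exact hcompz y
      have hXY := hCin bb (q (j+1))
      rw [hsums α, hsums β] at hXY
      have hbadj : ¬((1/((j:ℝ)+1)) * ‖∑ i ∈ Finset.range (E j), A j i • x i‖ ≤
            ‖∑ i ∈ Finset.range (E j), A j i • y i‖ ∧
          ‖∑ i ∈ Finset.range (E j), A j i • y i‖ ≤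
            ((j:ℝ)+1) * ‖∑ i ∈ Finset.range (E j), A j i • x i‖) := hbad (NN j) j
      apply hbadj
      set XS := ∑ i ∈ Finset.range (E j), A j i • x i
      set YS := ∑ i ∈ Finset.range (E j), A j i • y i
      have hXS0 : (0:ℝ) ≤ ‖XS‖ := norm_nonneg _
      have hYS0 : (0:ℝ) ≤ ‖YS‖ := norm_nonneg _
      have hrecip : 1 / ((j:ℝ)+1) ≤ 1 / C := by
        apply one_div_le_one_div_of_le hCpos hCj
      cases hα : α j
      · have hβ : β j = true := by
          cases hβ' : β j
          · rw [hα, hβ'] at hjne; simp at hjne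
          · rfl
        rw [hα, hβ] at hXY
        simp only [if_true, if_false] at hXY
        -- hXY : 1/C * ‖YS‖ ≤ ‖XS‖ ∧ ‖XS‖ ≤ C * ‖YS‖
        obtain ⟨hA1, hA2⟩ := hXY
        constructor
        · -- 1/(j+1) * ‖XS‖ ≤ ‖YS‖
          rw [div_mul_eq_mul_div, div_le_iff₀ hj1pos, one_mul]
          calc ‖XS‖ ≤ C * ‖YS‖ := hA2
            _ ≤ ((j:ℝ)+1) * ‖YS‖ := by nlinarith
            _ = ‖YS‖ * ((j:ℝ)+1) := mul_comm _ _
        · -- ‖YS‖ ≤ (j+1) * ‖XS‖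
          rw [div_mul_eq_mul_div, div_le_iff₀ hCpos, one_mul] at hA1
          calc ‖YS‖ ≤ ‖XS‖ * C := hA1
            _ = C * ‖XS‖ := mul_comm _ _
            _ ≤ ((j:ℝ)+1) * ‖XS‖ := by nlinarith
      · have hβ : β j = false := by
          cases hβ' : β j
          · rfl
          · rw [hα, hβ'] at hjne; simp at hjne
        rw [hα, hβ] at hXY
        simp only [if_true, if_false] at hXY
        -- hXY : 1/C * ‖XS‖ ≤ ‖YS‖ ∧ ‖YS‖ ≤ C * ‖XS‖
        obtain ⟨hA1, hA2⟩ := hXY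
        constructor
        · calc 1/((j:ℝ)+1) * ‖XS‖ ≤ 1/C * ‖XS‖ := by nlinarith
            _ ≤ ‖YS‖ := hA1
        · calc ‖YS‖ ≤ C * ‖XS‖ := hA2
            _ ≤ ((j:ℝ)+1) * ‖XS‖ := by nlinarith
end

section
/- Let (xᵢ) and (yᵢ) be two inequivalent normalized basic sequences in a Banach space. Then there exist successive (pairwise disjoint, increasing) finite intervals I₁ < I₂ < I₃ < … of ℕ such that for every k, the finite sequences (xᵢ)_{i∈I_k} and (yᵢ)_{i∈I_k} are not 2^k-equivalent. -/
variable {X : Type*} [NormedAddCommGroup X] [NormedSpace ℝ X]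

/-- The finite subsequences `(u i)_{i ∈ I}` and `(v i)_{i ∈ I}` are `K`-equivalent. -/
def FinKEquiv (I : Finset ℕ) (u v : ℕ → X) (K : ℝ) : Prop :=
  ∃ a b : ℝ, 0 < a ∧ 0 < b ∧ a * b ≤ K ∧ ∀ lam : ℕ → ℝ,
    (1 / a) * ‖∑ i ∈ I, lam i • u i‖ ≤ ‖∑ i ∈ I, lam i • v i‖ ∧
    ‖∑ i ∈ I, lam i • v i‖ ≤ b * ‖∑ i ∈ I, lam i • u i‖

/-- Two sequences are `K`-equivalent (on all finite initial segments, i.e. for all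
finitely supported scalars). -/
def SeqKEquiv (u v : ℕ → X) (K : ℝ) : Prop :=
  ∃ a b : ℝ, 0 < a ∧ 0 < b ∧ a * b ≤ K ∧ ∀ (lam : ℕ → ℝ) (n : ℕ),
    (1 / a) * ‖∑ i ∈ Finset.range n, lam i • u i‖ ≤ ‖∑ i ∈ Finset.range n, lam i • v i‖ ∧
    ‖∑ i ∈ Finset.range n, lam i • v i‖ ≤ b * ‖∑ i ∈ Finset.range n, lam i • u i‖

theorem IsBasicSeq.linearIndependent {e : ℕ → X} (he : IsBasicSeq e) :
    LinearIndependent ℝ e := by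
  obtain ⟨h0, K, hK1, hK⟩ := he
  rw [linearIndependent_iff']
  intro s g hsum i his
  set g' : ℕ → ℝ := fun j => if j ∈ s then g j else 0 with hg'
  set m : ℕ := (s.sup id) + 1 with hm
  have hsub : s ⊆ Finset.range m := by
    intro j hj
    exact Finset.mem_range.mpr (Nat.lt_succ_of_le (Finset.le_sup (f := id) hj))
  have hsum' : ∑ j ∈ Finset.range m, g' j • e j = 0 := by
    rw [← Finset.sum_subset hsub]
    · rw [← hsum]
      exact Finset.sum_congr rfl fun j hj => by simp [hg', hj]
    · intro j _ hj
      simp [hg', hj]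
  have hzero : ∀ n, n ≤ m → ∑ j ∈ Finset.range n, g' j • e j = 0 := by
    intro n hn
    have := hK g' n m hn
    rw [hsum', norm_zero, mul_zero] at this
    exact norm_le_zero_iff.mp this
  have hi1 : i + 1 ≤ m := Finset.mem_range.mp (hsub his)
  have : g' i • e i = 0 := by
    have h1 := hzero (i + 1) hi1
    have h2 := hzero i (Nat.le_of_succ_le hi1)
    rw [Finset.sum_range_succ, h2, zero_add] at h1
    exact h1
  have : g' i = 0 := by
    rcases smul_eq_zero.mp this with h | h
    · exact h
    · exact absurd h (h0 i)
  simpa [hg', his] using this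

theorem head_dom (x y : ℕ → X) (hy : LinearIndependent ℝ y) (p : ℕ) :
    ∃ C : ℝ, 0 < C ∧ ∀ lam : ℕ → ℝ,
      ‖∑ i ∈ Finset.range p, lam i • x i‖ ≤ C * ‖∑ i ∈ Finset.range p, lam i • y i‖ := by
  rcases Nat.eq_zero_or_pos p with hp | hp
  · exact ⟨1, one_pos, fun lam => by simp [hp]⟩
  haveI : Nonempty (Fin p) := ⟨⟨0, hp⟩⟩
  -- linear maps
  have mkT : ∀ u : ℕ → X, ∃ T : (Fin p → ℝ) →L[ℝ] X,
      ∀ c : Fin p → ℝ, T c = ∑ i : Fin p, c i • u i := by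
    intro u
    refine ⟨LinearMap.toContinuousLinearMap
      { toFun := fun c => ∑ i : Fin p, c i • u (i : ℕ)
        map_add' := fun c d => by
          simp [add_smul, Finset.sum_add_distrib]
        map_smul' := fun r c => by
          simp [smul_smul, Finset.smul_sum] }, fun c => ?_⟩
    simp [LinearMap.coe_toContinuousLinearMap']
  obtain ⟨Tx, hTx⟩ := mkT x
  obtain ⟨Ty, hTy⟩ := mkT y
  -- Ty injective at 0
  have hTy0 : ∀ c : Fin p → ℝ, Ty c = 0 → c = 0 := by
    intro c hc
    have hli : LinearIndependent ℝ (fun i : Fin p => y (i : ℕ)) :=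
      hy.comp (Fin.val : Fin p → ℕ) Fin.val_injective
    rw [Fintype.linearIndependent_iff] at hli
    funext i
    exact hli c (by rw [← hTy]; exact hc) i
  -- minimum of ‖Ty‖ on the unit sphere
  have hcpt : IsCompact (Metric.sphere (0 : Fin p → ℝ) 1) := isCompact_sphere _ _
  have hsne : (Metric.sphere (0 : Fin p → ℝ) 1).Nonempty :=
    NormedSpace.sphere_nonempty.mpr zero_le_one
  obtain ⟨c0, hc0, hmin⟩ := hcpt.exists_isMinOn hsne
    ((continuous_norm.comp Ty.continuous).continuousOn)
  set m : ℝ := ‖Ty c0‖ with hmdef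
  have hm : 0 < m := by
    rcases (norm_nonneg (Ty c0)).lt_or_eq with h | h
    · exact h
    · exfalso
      have : c0 = 0 := hTy0 c0 (norm_eq_zero.mp h.symm)
      rw [this] at hc0
      simp at hc0
  -- lower bound for Ty
  have hlow : ∀ c : Fin p → ℝ, m * ‖c‖ ≤ ‖Ty c‖ := by
    intro c
    rcases eq_or_ne c 0 with rfl | hc
    · simp
    have hcn : (0:ℝ) < ‖c‖ := norm_pos_iff.mpr hc
    have hmem : (‖c‖⁻¹ • c) ∈ Metric.sphere (0 : Fin p → ℝ) 1 := by
      simp [norm_smul, abs_of_nonneg (le_of_lt (inv_pos.mpr hcn)), inv_mul_cancel₀ hcn.ne']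
    have hh : m ≤ ‖Ty (‖c‖⁻¹ • c)‖ := hmin hmem
    rw [map_smul, norm_smul, norm_inv, norm_norm] at hh
    have h2 : m * ‖c‖ ≤ (‖c‖⁻¹ * ‖Ty c‖) * ‖c‖ :=
      mul_le_mul_of_nonneg_right hh hcn.le
    calc m * ‖c‖ ≤ (‖c‖⁻¹ * ‖Ty c‖) * ‖c‖ := h2
      _ = ‖Ty c‖ := by field_simp
  refine ⟨(‖Tx‖ + 1) / m, div_pos (by positivity) hm, fun lam => ?_⟩
  set c : Fin p → ℝ := fun i => lam (i : ℕ) with hc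
  have ex : ∑ i ∈ Finset.range p, lam i • x i = Tx c := by
    rw [hTx]; exact (Fin.sum_univ_eq_sum_range (fun i => lam i • x i) p).symm
  have ey : ∑ i ∈ Finset.range p, lam i • y i = Ty c := by
    rw [hTy]; exact (Fin.sum_univ_eq_sum_range (fun i => lam i • y i) p).symm
  rw [ex, ey]
  have h1 : ‖Tx c‖ ≤ ‖Tx‖ * ‖c‖ := Tx.le_opNorm c
  have h2 := hlow c
  have hTxnn : (0:ℝ) ≤ ‖Tx‖ := norm_nonneg _
  have hcnn : (0:ℝ) ≤ ‖c‖ := norm_nonneg _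
  have heq : ((‖Tx‖ + 1) / m) * (m * ‖c‖) = (‖Tx‖ + 1) * ‖c‖ := by
    field_simp
  have : ‖Tx c‖ ≤ ((‖Tx‖ + 1) / m) * (m * ‖c‖) := by
    rw [heq]; nlinarith
  exact this.trans (mul_le_mul_of_nonneg_left h2 (by positivity))

theorem sum_trunc (u : ℕ → X) (lam : ℕ → ℝ) {m p : ℕ} (h : m ≤ p) :
    ∑ i ∈ Finset.range p, (if i < m then lam i else 0) • u i
      = ∑ i ∈ Finset.range m, lam i • u i := by
  rw [← Finset.sum_range_add_sum_Ico (fun i => (if i < m then lam i else 0) • u i) h]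
  have h1 : ∑ i ∈ Finset.range m, (if i < m then lam i else 0) • u i
      = ∑ i ∈ Finset.range m, lam i • u i :=
    Finset.sum_congr rfl fun i hi => by rw [if_pos (Finset.mem_range.mp hi)]
  have h2 : ∑ i ∈ Finset.Ico m p, (if i < m then lam i else 0) • u i = 0 :=
    Finset.sum_eq_zero fun i hi => by
      rw [if_neg (not_lt.mpr (Finset.mem_Ico.mp hi).1), zero_smul]
  rw [h1, h2, add_zero]

theorem glue (u v : ℕ → X) (p : ℕ) (Kv C K : ℝ)
    (hKv1 : 1 ≤ Kv)
    (hKv : ∀ (a : ℕ → ℝ) (n m : ℕ), n ≤ m →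
      ‖∑ i ∈ Finset.range n, a i • v i‖ ≤ Kv * ‖∑ i ∈ Finset.range m, a i • v i‖)
    (hC : 0 < C)
    (hhead : ∀ lam : ℕ → ℝ,
      ‖∑ i ∈ Finset.range p, lam i • u i‖ ≤ C * ‖∑ i ∈ Finset.range p, lam i • v i‖)
    (hK : 0 < K)
    (htail : ∀ q, p ≤ q → ∀ lam : ℕ → ℝ,
      ‖∑ i ∈ Finset.Icc p q, lam i • u i‖ ≤ K * ‖∑ i ∈ Finset.Icc p q, lam i • v i‖) :
    ∀ (lam : ℕ → ℝ) (n : ℕ),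
      ‖∑ i ∈ Finset.range n, lam i • u i‖
        ≤ (C * Kv + K * (1 + Kv)) * ‖∑ i ∈ Finset.range n, lam i • v i‖ := by
  intro lam n
  set m := min n p with hm
  have hmn : m ≤ n := min_le_left _ _
  have hmp : m ≤ p := min_le_right _ _
  set sy := ‖∑ i ∈ Finset.range n, lam i • v i‖ with hsy
  have hsy0 : 0 ≤ sy := norm_nonneg _
  -- split
  have hsplitu : ∑ i ∈ Finset.range n, lam i • u i
      = ∑ i ∈ Finset.range m, lam i • u i + ∑ i ∈ Finset.Ico m n, lam i • u i :=
    (Finset.sum_range_add_sum_Ico _ hmn).symm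
  have hsplitv : ∑ i ∈ Finset.Ico m n, lam i • v i
      = ∑ i ∈ Finset.range n, lam i • v i - ∑ i ∈ Finset.range m, lam i • v i := by
    rw [eq_sub_iff_add_eq, add_comm]
    exact Finset.sum_range_add_sum_Ico _ hmn
  -- head estimate
  have hhead' : ‖∑ i ∈ Finset.range m, lam i • u i‖
      ≤ C * ‖∑ i ∈ Finset.range m, lam i • v i‖ := by
    have := hhead (fun i => if i < m then lam i else 0)
    rwa [sum_trunc u lam hmp, sum_trunc v lam hmp] at this
  -- projection estimate
  have hproj : ‖∑ i ∈ Finset.range m, lam i • v i‖ ≤ Kv * sy := hKv lam m n hmn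
  -- tail estimates
  have htail' : ‖∑ i ∈ Finset.Ico m n, lam i • u i‖
      ≤ K * ‖∑ i ∈ Finset.Ico m n, lam i • v i‖ := by
    rcases le_or_gt n p with hnp | hpn
    · have hmn' : m = n := min_eq_left hnp
      rw [hmn']
      simp
    · have hmn' : m = p := min_eq_right hpn.le ▸ rfl
      have hn1 : p ≤ n - 1 := Nat.le_sub_one_of_lt hpn
      have hIco : Finset.Ico m n = Finset.Icc p (n - 1) := by
        rw [hmn']
        ext i
        simp only [Finset.mem_Ico, Finset.mem_Icc]
        omega
      rw [hIco]
      exact htail (n - 1) hn1 lam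
  have htailv : ‖∑ i ∈ Finset.Ico m n, lam i • v i‖ ≤ (1 + Kv) * sy := by
    rw [hsplitv]
    calc ‖∑ i ∈ Finset.range n, lam i • v i - ∑ i ∈ Finset.range m, lam i • v i‖
        ≤ ‖∑ i ∈ Finset.range n, lam i • v i‖ + ‖∑ i ∈ Finset.range m, lam i • v i‖ :=
          norm_sub_le _ _
      _ ≤ sy + Kv * sy := add_le_add le_rfl hproj
      _ = (1 + Kv) * sy := by ring
  calc ‖∑ i ∈ Finset.range n, lam i • u i‖
      = ‖∑ i ∈ Finset.range m, lam i • u i + ∑ i ∈ Finset.Ico m n, lam i • u i‖ := by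
        rw [← hsplitu]
    _ ≤ ‖∑ i ∈ Finset.range m, lam i • u i‖ + ‖∑ i ∈ Finset.Ico m n, lam i • u i‖ :=
        norm_add_le _ _
    _ ≤ C * ‖∑ i ∈ Finset.range m, lam i • v i‖
        + K * ‖∑ i ∈ Finset.Ico m n, lam i • v i‖ := add_le_add hhead' htail'
    _ ≤ C * (Kv * sy) + K * ((1 + Kv) * sy) :=
        add_le_add (mul_le_mul_of_nonneg_left hproj hC.le)
          (mul_le_mul_of_nonneg_left htailv hK.le)
    _ = (C * Kv + K * (1 + Kv)) * sy := by ring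


theorem exists_bad (x y : ℕ → X)
    (hx : IsBasicSeq x) (hxn : ∀ i, ‖x i‖ = 1)
    (hy : IsBasicSeq y) (hyn : ∀ i, ‖y i‖ = 1)
    (hne : ¬ ∃ K : ℝ, SeqKEquiv x y K) (p : ℕ) (K : ℝ) (hK : 1 ≤ K) :
    ∃ q, p ≤ q ∧ ¬ FinKEquiv (Finset.Icc p q) x y K := by
  by_contra hcon
  push_neg at hcon
  have hKpos : (0:ℝ) < K := lt_of_lt_of_le one_pos hK
  have key : ∀ q, p ≤ q → ∀ lam : ℕ → ℝ,
      ‖∑ i ∈ Finset.Icc p q, lam i • x i‖ ≤ K * ‖∑ i ∈ Finset.Icc p q, lam i • y i‖ ∧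
      ‖∑ i ∈ Finset.Icc p q, lam i • y i‖ ≤ K * ‖∑ i ∈ Finset.Icc p q, lam i • x i‖ := by
    intro q hq
    obtain ⟨a, b, ha, hb, hab, hin⟩ := hcon q hq
    have hp : p ∈ Finset.Icc p q := Finset.mem_Icc.mpr ⟨le_rfl, hq⟩
    have hdelta : ∀ u : ℕ → X,
        ∑ i ∈ Finset.Icc p q, (if i = p then (1:ℝ) else 0) • u i = u p := by
      intro u
      rw [Finset.sum_eq_single_of_mem p hp]
      · simp
      · intro i _ hne'
        rw [if_neg hne', zero_smul]
    obtain ⟨h1, h2⟩ := hin (fun i => if i = p then 1 else 0)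
    rw [hdelta x, hdelta y, hxn p, hyn p] at h1 h2
    have ha1 : 1 ≤ a := by
      rw [mul_one, div_le_one ha] at h1
      exact h1
    have hb1 : 1 ≤ b := by nlinarith
    have haK : a ≤ K := by nlinarith
    have hbK : b ≤ K := by nlinarith
    intro lam
    obtain ⟨g1, g2⟩ := hin lam
    constructor
    · have h3 := mul_le_mul_of_nonneg_left g1 ha.le
      rw [← mul_assoc, mul_one_div, div_self ha.ne', one_mul] at h3
      exact h3.trans (mul_le_mul_of_nonneg_right haK (norm_nonneg _))
    · exact g2.trans (mul_le_mul_of_nonneg_right hbK (norm_nonneg _))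
  obtain ⟨Cxy, hCxy, hheadxy⟩ := head_dom x y hy.linearIndependent p
  obtain ⟨Cyx, hCyx, hheadyx⟩ := head_dom y x hx.linearIndependent p
  obtain ⟨hx0, Kx, hKx1, hKx⟩ := hx
  obtain ⟨hy0, Ky, hKy1, hKy⟩ := hy
  have hKx0 : (0:ℝ) < Kx := lt_of_lt_of_le one_pos hKx1
  have hKy0 : (0:ℝ) < Ky := lt_of_lt_of_le one_pos hKy1
  set A := Cxy * Ky + K * (1 + Ky) with hA'
  set B := Cyx * Kx + K * (1 + Kx) with hB'
  have hA : 0 < A := by nlinarith [mul_pos hCxy hKy0]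
  have hB : 0 < B := by nlinarith [mul_pos hCyx hKx0]
  have estX := glue x y p Ky Cxy K hKy1 hKy hCxy hheadxy hKpos
    (fun q hq lam => (key q hq lam).1)
  have estY := glue y x p Kx Cyx K hKx1 hKx hCyx hheadyx hKpos
    (fun q hq lam => (key q hq lam).2)
  exact hne ⟨A * B, A, B, hA, hB, le_rfl, fun lam n =>
    ⟨by
      have h := estX lam n
      rw [one_div]
      calc A⁻¹ * ‖∑ i ∈ Finset.range n, lam i • x i‖
          ≤ A⁻¹ * (A * ‖∑ i ∈ Finset.range n, lam i • y i‖) :=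
            mul_le_mul_of_nonneg_left h (inv_nonneg.mpr hA.le)
        _ = ‖∑ i ∈ Finset.range n, lam i • y i‖ := by
            rw [← mul_assoc, inv_mul_cancel₀ hA.ne', one_mul],
      estY lam n⟩⟩

/-- given two inequivalent normalized basic sequences `x`, `y`, there are
successive finite intervals `I_k = [p k, q k]` such that `(x i)_{i ∈ I_k}` and
`(y i)_{i ∈ I_k}` are not `2^k`-equivalent. -/
theorem successive_intervals_of_inequivalence
    (x y : ℕ → X)
    (hx : IsBasicSeq x) (hxn : ∀ i, ‖x i‖ = 1)
    (hy : IsBasicSeq y) (hyn : ∀ i, ‖y i‖ = 1)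
    (hne : ¬ ∃ K : ℝ, SeqKEquiv x y K) :
    ∃ p q : ℕ → ℕ, (∀ k, p k ≤ q k) ∧ (∀ k, q k < p (k + 1)) ∧
      ∀ k, ¬ FinKEquiv (Finset.Icc (p k) (q k)) x y (2 ^ k) := by
  have H : ∀ (pp k : ℕ), ∃ q, pp ≤ q ∧ ¬ FinKEquiv (Finset.Icc pp q) x y (2 ^ k) :=
    fun pp k => exists_bad x y hx hxn hy hyn hne pp (2 ^ k) (one_le_pow₀ (by norm_num))
  choose Q hQ1 hQ2 using H
  refine ⟨fun k => Nat.rec 0 (fun k pk => Q pk k + 1) k,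
    fun k => Q (Nat.rec 0 (fun k pk => Q pk k + 1) k) k,
    fun k => hQ1 _ _, fun k => Nat.lt_succ_self _, fun k => hQ2 _ _⟩
end

section
/- Every closed subspace of codimension n in a Banach space X is complemented by a bounded projection of norm at most 2ⁿ + ε, for every ε > 0. -/
universe u

set_option maxHeartbeats 1000000 in
theorem finite_codim_projection_aux :
    ∀ (n : ℕ) {X : Type u} [NormedAddCommGroup X] [NormedSpace ℝ X] [CompleteSpace X]
    (Z : Submodule ℝ X), IsClosed (Z : Set X) →
    ∀ [FiniteDimensional ℝ (X ⧸ Z)], Module.finrank ℝ (X ⧸ Z) = n →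
    ∀ ε > (0 : ℝ), ∃ P : X →L[ℝ] X,
      (∀ x, P (P x) = P x) ∧ LinearMap.range (P : X →ₗ[ℝ] X) = Z ∧ ‖P‖ ≤ 2 ^ n + ε := by
  intro n
  induction n with
  | zero =>
    intro X _ _ _ Z hZc _ hZ ε hε
    have hsub : Subsingleton (X ⧸ Z) := by
      rwa [← Module.finrank_zero_iff (R := ℝ)]
    have hZtop : Z = ⊤ := by
      rw [Submodule.eq_top_iff']
      intro x
      have : (Submodule.Quotient.mk x : X ⧸ Z) = 0 := Subsingleton.elim _ _
      exact (Submodule.Quotient.mk_eq_zero Z).mp this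
    refine ⟨ContinuousLinearMap.id ℝ X, fun x => rfl, ?_, ?_⟩
    · rw [hZtop]
      exact Submodule.eq_top_iff'.mpr fun x => ⟨x, rfl⟩
    · have : ‖ContinuousLinearMap.id ℝ X‖ ≤ 1 := ContinuousLinearMap.norm_id_le
      simpa using this.trans (by linarith)
  | succ n ih =>
    intro X _ _ _ Z hZc _ hZ ε hε
    haveI hcl : IsClosed (Z : Set X) := hZc
    -- the quotient is nontrivial
    have hnt : Nontrivial (X ⧸ Z) := by
      have : 0 < Module.finrank ℝ (X ⧸ Z) := by omega
      exact Module.finrank_pos_iff.mp this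
    obtain ⟨q, hq⟩ := exists_ne (0 : X ⧸ Z)
    obtain ⟨x₀, rfl⟩ := Submodule.Quotient.mk_surjective Z q
    have hx₀ : x₀ ∉ Z := fun h => hq ((Submodule.Quotient.mk_eq_zero Z).mpr h)
    -- constants
    set c : ℝ := 2 ^ n + ε / 4 with hc_def
    have hc : (0 : ℝ) < c := by positivity
    set r : ℝ := c / (c + ε / 4) with hr_def
    have hcε : (0 : ℝ) < c + ε / 4 := by positivity
    have hr0 : (0 : ℝ) < r := by positivity
    have hr1 : r < 1 := by
      rw [hr_def, div_lt_one hcε]; linarith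
    -- Riesz lemma
    obtain ⟨x, hxZ, hx⟩ := riesz_lemma hZc ⟨x₀, hx₀⟩ hr1
    have hxne : (Submodule.Quotient.mk x : X ⧸ Z) ≠ 0 :=
      fun h => hxZ ((Submodule.Quotient.mk_eq_zero Z).mp h)
    have hxn0 : x ≠ 0 := fun h => hxZ (h ▸ Z.zero_mem)
    have hxpos : (0 : ℝ) < ‖x‖ := norm_pos_iff.mpr hxn0
    set d : ℝ := ‖(Submodule.Quotient.mk x : X ⧸ Z)‖ with hd_def
    have hdr : r * ‖x‖ ≤ d := by
      refine le_of_forall_pos_le_add fun ε' hε' => ?_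
      obtain ⟨m, hm, hmlt⟩ :=
        Submodule.Quotient.norm_mk_lt (Submodule.Quotient.mk x : X ⧸ Z) hε'
      have hxm : x - m ∈ Z := by
        rw [← Submodule.Quotient.mk_eq_zero, Submodule.Quotient.mk_sub, hm, sub_self]
      have := hx (x - m) hxm
      simp only [sub_sub_cancel] at this
      linarith
    have hd : (0 : ℝ) < d := lt_of_lt_of_le (by positivity) hdr
    -- dual vector
    obtain ⟨ψ, hψ1, hψx⟩ := exists_dual_vector ℝ (Submodule.Quotient.mk x : X ⧸ Z) (norm_ne_zero_iff.mpr hxne)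
    -- the functional g = d⁻¹ • (ψ ∘ mk)
    set g0 : X →L[ℝ] ℝ :=
      LinearMap.mkContinuous (ψ.toLinearMap.comp Z.mkQ) 1 (fun m => by
        calc ‖ψ (Submodule.Quotient.mk m)‖
            ≤ ‖ψ‖ * ‖(Submodule.Quotient.mk m : X ⧸ Z)‖ := ψ.le_opNorm _
          _ ≤ 1 * ‖m‖ := by
              rw [hψ1]
              exact mul_le_mul_of_nonneg_left (Submodule.Quotient.norm_mk_le Z m)
                zero_le_one) with hg0_def
    set g : X →L[ℝ] ℝ := d⁻¹ • g0 with hg_def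
    have hg0_apply : ∀ v : X, g0 v = ψ (Submodule.Quotient.mk v) := fun v => rfl
    have hg_apply : ∀ v : X, g v = d⁻¹ * ψ (Submodule.Quotient.mk v) := by
      intro v
      rw [hg_def, ContinuousLinearMap.smul_apply, hg0_apply, smul_eq_mul]
    have hg_norm : ‖g‖ ≤ d⁻¹ := by
      apply ContinuousLinearMap.opNorm_le_bound _ (by positivity)
      intro v
      rw [hg_apply, Real.norm_eq_abs, abs_mul, abs_of_pos (show (0:ℝ) < d⁻¹ by positivity)]
      apply mul_le_mul_of_nonneg_left _ (by positivity)
      calc |ψ (Submodule.Quotient.mk v)| = ‖ψ (Submodule.Quotient.mk v)‖ := rfl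
        _ ≤ ‖ψ‖ * ‖(Submodule.Quotient.mk v : X ⧸ Z)‖ := ψ.le_opNorm _
        _ ≤ 1 * ‖v‖ := by
            rw [hψ1]
            exact mul_le_mul_of_nonneg_left (Submodule.Quotient.norm_mk_le Z v) zero_le_one
        _ = ‖v‖ := one_mul _
    -- the bigger subspace Z'
    set Z' : Submodule ℝ X :=
      Submodule.comap Z.mkQ (ℝ ∙ (Submodule.Quotient.mk x : X ⧸ Z)) with hZ'_def
    have hZZ' : Z ≤ Z' := by
      intro v hv
      simp only [hZ'_def, Submodule.mem_comap, Submodule.mkQ_apply]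
      rw [show (Submodule.Quotient.mk v : X ⧸ Z) = 0 from
        (Submodule.Quotient.mk_eq_zero Z).mpr hv]
      exact Submodule.zero_mem _
    -- continuous version of mkQ
    set mkQc : X →L[ℝ] (X ⧸ Z) :=
      LinearMap.mkContinuous Z.mkQ 1 (fun m => by
        simpa using Submodule.Quotient.norm_mk_le Z m) with hmkQc_def
    have hZ'c : IsClosed (Z' : Set X) := by
      have : (Z' : Set X) = mkQc ⁻¹' ((ℝ ∙ (Submodule.Quotient.mk x : X ⧸ Z)) : Set (X ⧸ Z)) := rfl
      rw [this]
      exact (Submodule.closed_of_finiteDimensional _).preimage mkQc.continuous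
    have hmap : Z'.map Z.mkQ = (ℝ ∙ (Submodule.Quotient.mk x : X ⧸ Z)) := by
      rw [hZ'_def, Submodule.map_comap_eq, Z.range_mkQ, top_inf_eq]
    -- the quotient equivalence
    let e : ((X ⧸ Z) ⧸ Z'.map Z.mkQ) ≃ₗ[ℝ] (X ⧸ Z') :=
      Submodule.quotientQuotientEquivQuotient Z Z' hZZ'
    haveI : FiniteDimensional ℝ (X ⧸ Z') := Module.Finite.equiv e
    have hfr : Module.finrank ℝ (X ⧸ Z') = n := by
      have h1 : Module.finrank ℝ ((X ⧸ Z) ⧸ Z'.map Z.mkQ) +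
          Module.finrank ℝ (Z'.map Z.mkQ) = Module.finrank ℝ (X ⧸ Z) :=
        Submodule.finrank_quotient_add_finrank _
      have h2 : Module.finrank ℝ (Z'.map Z.mkQ) = 1 := by
        rw [hmap]; exact finrank_span_singleton hxne
      have h3 : Module.finrank ℝ (X ⧸ Z') = Module.finrank ℝ ((X ⧸ Z) ⧸ Z'.map Z.mkQ) :=
        (e.finrank_eq).symm
      omega
    -- apply the induction hypothesis
    obtain ⟨P', hP'idem, hP'range, hP'norm⟩ :=
      ih Z' hZ'c hfr (ε / 4) (by positivity)
    -- the codimension-one projection Q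
    set Q : X →L[ℝ] X := ContinuousLinearMap.id ℝ X - g.smulRight x with hQ_def
    have hQ_apply : ∀ v : X, Q v = v - g v • x := fun v => rfl
    -- Q maps Z' into Z
    have hQZ' : ∀ v ∈ Z', Q v ∈ Z := by
      intro v hv
      rw [hZ'_def, Submodule.mem_comap, Submodule.mkQ_apply,
        Submodule.mem_span_singleton] at hv
      obtain ⟨t, ht⟩ := hv
      have hgv : g v = t := by
        rw [hg_apply, ← ht, map_smul, smul_eq_mul, hψx, ← hd_def]
        field_simp
        simp [mul_comm]
      rw [← Submodule.Quotient.mk_eq_zero, hQ_apply, hgv, Submodule.Quotient.mk_sub,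
        Submodule.Quotient.mk_smul, ← ht, sub_self]
    -- P' fixes Z
    have hP'fix : ∀ w ∈ Z, P' w = w := by
      intro w hw
      have : w ∈ LinearMap.range (P' : X →ₗ[ℝ] X) := hP'range ▸ (hZZ' hw)
      obtain ⟨u, hu⟩ := this
      rw [← hu]; exact hP'idem u
    -- Q fixes Z
    have hQfix : ∀ w ∈ Z, Q w = w := by
      intro w hw
      have hgw : g w = 0 := by
        rw [hg_apply, show (Submodule.Quotient.mk w : X ⧸ Z) = 0 from
          (Submodule.Quotient.mk_eq_zero Z).mpr hw, map_zero, mul_zero]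
      rw [hQ_apply, hgw, zero_smul, sub_zero]
    -- the projection
    refine ⟨Q.comp P', ?_, ?_, ?_⟩
    · -- idempotent
      intro y
      have hPy : Q (P' y) ∈ Z := hQZ' _ (hP'range ▸ LinearMap.mem_range_self (P' : X →ₗ[ℝ] X) y)
      simp only [ContinuousLinearMap.comp_apply]
      rw [hP'fix _ hPy, hQfix _ hPy]
    · -- range
      apply le_antisymm
      · rintro _ ⟨y, rfl⟩
        exact hQZ' _ (hP'range ▸ LinearMap.mem_range_self (P' : X →ₗ[ℝ] X) y)
      · intro w hw
        exact ⟨w, by simp only [ContinuousLinearMap.coe_coe, ContinuousLinearMap.comp_apply,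
          hP'fix _ hw, hQfix _ hw]⟩
    · -- norm bound
      have hQnorm : ‖Q‖ ≤ 1 + 1 / r := by
        rw [hQ_def]
        calc ‖ContinuousLinearMap.id ℝ X - g.smulRight x‖
            ≤ ‖ContinuousLinearMap.id ℝ X‖ + ‖g.smulRight x‖ := norm_sub_le _ _
          _ ≤ 1 + ‖g‖ * ‖x‖ := by
              gcongr
              · exact ContinuousLinearMap.norm_id_le
              · exact (ContinuousLinearMap.norm_smulRight_apply g x).le
          _ ≤ 1 + 1 / r := by
              gcongr
              calc ‖g‖ * ‖x‖ ≤ d⁻¹ * ‖x‖ :=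
                    mul_le_mul_of_nonneg_right hg_norm (norm_nonneg _)
                _ ≤ 1 / r := by
                    rw [inv_mul_eq_div, div_le_div_iff₀ hd hr0]
                    nlinarith [hdr]
      have hr_inv : 1 / r = (c + ε / 4) / c := by rw [hr_def, one_div_div]
      calc ‖Q.comp P'‖ ≤ ‖Q‖ * ‖P'‖ := ContinuousLinearMap.opNorm_comp_le _ _
        _ ≤ (1 + 1 / r) * c := by
            apply mul_le_mul hQnorm _ (norm_nonneg _) (by positivity)
            rw [hc_def]; exact hP'norm
        _ = 2 * c + ε / 4 := by
            rw [hr_inv]; field_simp; ring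
        _ ≤ 2 ^ (n + 1) + ε := by
            rw [hc_def]; ring_nf; nlinarith [pow_pos (by norm_num : (0:ℝ) < 2) n]

/-- every closed subspace of codimension `n` in a Banach space is the
range of a projection of norm at most `2^n + ε`, for every `ε > 0`. -/
theorem finite_codim_projection
    (n : ℕ) {X : Type*} [NormedAddCommGroup X] [NormedSpace ℝ X] [CompleteSpace X]
    (Z : Submodule ℝ X) (hZc : IsClosed (Z : Set X))
    [FiniteDimensional ℝ (X ⧸ Z)] (hZ : Module.finrank ℝ (X ⧸ Z) = n) :
    ∀ ε > (0 : ℝ), ∃ P : X →L[ℝ] X,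
      (∀ x, P (P x) = P x) ∧ LinearMap.range (P : X →ₗ[ℝ] X) = Z ∧ ‖P‖ ≤ 2 ^ n + ε :=
  finite_codim_projection_aux n Z hZc hZ
end
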